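/- arXiv:1607.01262 — 7 statements merged into one kernel-verified Lean document; each statement's English description precedes it below -/
import Mathlib

section
/- Let Z be a stability function on an abelian category 𝒜, and let A, B be nonzero Z-semistable objects of 𝒜 with μ(A) > μ(B) (equivalently D(A)·R(B) > D(B)·R(A)). Then Hom(A, B) = 0. -/
open CategoryTheory CategoryTheory.Limits

namespace BridgelandNotes

variable {𝒜 : Type*} [Category 𝒜] [Abelian 𝒜]

/-- `Z` is additive on short exact sequences:
`Z(E) = Z(F) + Z(G)` whenever `0 → F → E → G → 0` is exact in `𝒜`. -/
def AdditiveOnSES (Z : 𝒜 → ℂ) : Prop :=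
  ∀ S : ShortComplex 𝒜, S.ShortExact → Z S.X₂ = Z S.X₁ + Z S.X₃

/-- `Z` is a stability function on the abelian category `𝒜`: it is additive on short
exact sequences, every nonzero object satisfies `Im Z(E) ≥ 0`, and `Im Z(E) = 0`
implies `Re Z(E) < 0`. -/
def IsStabilityFunction (Z : 𝒜 → ℂ) : Prop :=
  AdditiveOnSES Z ∧
    ∀ E : 𝒜, ¬ IsZero E → 0 ≤ (Z E).im ∧ ((Z E).im = 0 → (Z E).re < 0)

/-- The generalized rank `R(E) := Im Z(E)`. -/
def genR (Z : 𝒜 → ℂ) (E : 𝒜) : ℝ := (Z E).im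

/-- The generalized degree `D(E) := -Re Z(E)`. -/
def genD (Z : 𝒜 → ℂ) (E : 𝒜) : ℝ := -(Z E).re

/-- The slope inequality `μ(A) ≤ μ(B)`, encoded for nonzero objects by
cross-multiplication: `D(A)·R(B) ≤ D(B)·R(A)`. -/
def SlopeLE (Z : 𝒜 → ℂ) (A B : 𝒜) : Prop :=
  genD Z A * genR Z B ≤ genD Z B * genR Z A

/-- The strict slope inequality `μ(A) < μ(B)`, encoded for nonzero objects by
cross-multiplication: `D(A)·R(B) < D(B)·R(A)`. -/
def SlopeLT (Z : 𝒜 → ℂ) (A B : 𝒜) : Prop :=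
  genD Z A * genR Z B < genD Z B * genR Z A

/-- A nonzero object `E` is `Z`-semistable if `μ(F) ≤ μ(E)` for every nonzero proper
subobject `F` of `E`. -/
def IsSemistable (Z : 𝒜 → ℂ) (E : 𝒜) : Prop :=
  ¬ IsZero E ∧
    ∀ (F : 𝒜) (f : F ⟶ E), Mono f → ¬ IsZero F → ¬ IsIso f → SlopeLE Z F E

/-- The abelian category `𝒜` is noetherian: every ascending chain of subobjects of
any object stabilizes. -/
def NoetherianCategory (𝒜 : Type*) [Category 𝒜] [Abelian 𝒜] : Prop :=
  ∀ (E : 𝒜) (f : ℕ →o Subobject E), ∃ N : ℕ, ∀ n : ℕ, N ≤ n → f n = f N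

/-- The image of the generalized rank `R = Im ∘ Z` is a discrete subset of `ℝ`. -/
def HasDiscreteRank (Z : 𝒜 → ℂ) : Prop :=
  ∀ x ∈ Set.range (genR Z), ∃ ε > (0 : ℝ), ∀ y ∈ Set.range (genR Z), |y - x| < ε → y = x

/-- The subquotient `T/S` of two nested subobjects `S ≤ T` of an object of `𝒜`. -/
noncomputable def subquot {E : 𝒜} (S T : Subobject E) (h : S ≤ T) : 𝒜 :=
  cokernel (Subobject.ofLE S T h)

/-!
A nonzero `f : A ⟶ B` factors as `A ↠ coim f ↪ B`. Semistability of `A` bounds the slope of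
`ker f`, so by the see-saw property of `Z` on `0 → ker f → A → coim f → 0` we get
`μ(A) ≤ μ(coim f)`; semistability of `B` gives `μ(coim f) ≤ μ(B)`. Slopes of nonzero objects
are totally preordered (by the argument of `Z` in `(0, π]`), so `μ(A) ≤ μ(B)`, a contradiction.
-/

theorem cross_mul_le_trans {d₁ r₁ d₂ r₂ d₃ r₃ : ℝ} (hr₁ : 0 ≤ r₁) (hr₂ : 0 ≤ r₂)
    (hd₂ : r₂ = 0 → 0 < d₂) (hr₃ : 0 ≤ r₃) (hd₃ : r₃ = 0 → 0 < d₃)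
    (h₁₂ : d₁ * r₂ ≤ d₂ * r₁) (h₂₃ : d₂ * r₃ ≤ d₃ * r₂) : d₁ * r₃ ≤ d₃ * r₁ := by
  rcases hr₂.eq_or_lt with hr₂0 | hr₂pos
  · -- a middle term of infinite slope forces the last one to have infinite slope too
    subst hr₂0
    have hr₃0 : r₃ = 0 := le_antisymm (by nlinarith [hd₂ rfl]) hr₃
    subst hr₃0
    simpa using mul_nonneg (hd₃ rfl).le hr₁
  · refine le_of_mul_le_mul_right ?_ hr₂pos
    calc d₁ * r₃ * r₂ = d₁ * r₂ * r₃ := by ring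
      _ ≤ d₂ * r₁ * r₃ := mul_le_mul_of_nonneg_right h₁₂ hr₃
      _ = d₂ * r₃ * r₁ := by ring
      _ ≤ d₃ * r₂ * r₁ := mul_le_mul_of_nonneg_right h₂₃ hr₁
      _ = d₃ * r₁ * r₂ := by ring

namespace AdditiveOnSES

variable {Z : 𝒜 → ℂ}

theorem eq_zero_of_isZero (hZ : AdditiveOnSES Z) {O : 𝒜} (hO : IsZero O) : Z O = 0 := by
  have hS : (ShortComplex.mk (0 : O ⟶ O) (0 : O ⟶ O) comp_zero).ShortExact :=
    .mk' (ShortComplex.exact_of_isZero_X₂ _ hO) (hO.mono _) (hO.epi _)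
  simpa using hZ _ hS

open ZeroObject in
theorem eq_of_iso (hZ : AdditiveOnSES Z) {X Y : 𝒜} (e : X ≅ Y) : Z X = Z Y := by
  have hS : (ShortComplex.mk e.hom (0 : Y ⟶ 0) comp_zero).ShortExact :=
    .mk' ((ShortComplex.exact_iff_epi _ rfl).2 inferInstance) inferInstance inferInstance
  simpa [hZ.eq_zero_of_isZero (isZero_zero 𝒜)] using (hZ _ hS).symm

theorem eq_kernel_add_coimage (hZ : AdditiveOnSES Z) {A B : 𝒜} (f : A ⟶ B) :
    Z A = Z (kernel f) + Z (Abelian.coimage f) :=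
  hZ (ShortComplex.mk (kernel.ι f) (Abelian.coimage.π f) (cokernel.condition _))
    (.mk' (ShortComplex.exact_of_g_is_cokernel _ (cokernelIsCokernel (kernel.ι f)))
      inferInstance inferInstance)

end AdditiveOnSES

theorem slopeLE_of_eq {α : Type*} {Z : α → ℂ} {X Y : α} (h : Z X = Z Y) : SlopeLE Z X Y := by
  unfold SlopeLE genD genR
  rw [h]

theorem slopeLE_of_eq_add {α : Type*} {Z : α → ℂ} {E K Q : α} (h : Z E = Z K + Z Q)
    (hK : SlopeLE Z K E) : SlopeLE Z E Q := by
  simp only [SlopeLE, genD, genR, h, Complex.add_re, Complex.add_im] at hK ⊢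
  linear_combination hK

section

variable {Z : 𝒜 → ℂ}

theorem slopeLE_of_isZero {X Y : 𝒜} (hZ : AdditiveOnSES Z) (hX : IsZero X) : SlopeLE Z X Y := by
  simp [SlopeLE, genD, genR, hZ.eq_zero_of_isZero hX]

theorem IsSemistable.slopeLE_of_mono {E F : 𝒜} (hE : IsSemistable Z E) (hZ : AdditiveOnSES Z)
    (i : F ⟶ E) [Mono i] : SlopeLE Z F E := by
  by_cases hF : IsZero F
  · exact slopeLE_of_isZero hZ hF
  by_cases hi : IsIso i
  · exact slopeLE_of_eq (hZ.eq_of_iso (asIso i))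
  exact hE.2 F i inferInstance hF hi

theorem IsStabilityFunction.slopeLE_trans (hZ : IsStabilityFunction Z) {X Y W : 𝒜}
    (hX : ¬ IsZero X) (hY : ¬ IsZero Y) (hW : ¬ IsZero W)
    (hXY : SlopeLE Z X Y) (hYW : SlopeLE Z Y W) : SlopeLE Z X W :=
  cross_mul_le_trans (hZ.2 X hX).1 (hZ.2 Y hY).1 (fun h => neg_pos.2 ((hZ.2 Y hY).2 h))
    (hZ.2 W hW).1 (fun h => neg_pos.2 ((hZ.2 W hW).2 h)) hXY hYW

theorem not_isZero_coimage {A B : 𝒜} {f : A ⟶ B} (hf : f ≠ 0) :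
    ¬ IsZero (Abelian.coimage f) := fun h =>
  hf (by rw [← Abelian.coimage.fac f, h.eq_of_src (Abelian.factorThruCoimage f) 0, comp_zero])

end

/-- If `A`, `B` are nonzero `Z`-semistable objects with `μ(A) > μ(B)`
(i.e. `D(B)·R(A) < D(A)·R(B)`), then `Hom(A, B) = 0`. -/
theorem hom_eq_zero_of_slope_lt (Z : 𝒜 → ℂ) (hZ : IsStabilityFunction Z) (A B : 𝒜)
    (hA : IsSemistable Z A) (hB : IsSemistable Z B)
    (hslope : SlopeLT Z B A) (f : A ⟶ B) : f = 0 := by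
  by_contra hf
  have hAC : SlopeLE Z A (Abelian.coimage f) :=
    slopeLE_of_eq_add (hZ.1.eq_kernel_add_coimage f) (hA.slopeLE_of_mono hZ.1 (kernel.ι f))
  have hCB : SlopeLE Z (Abelian.coimage f) B :=
    hB.slopeLE_of_mono hZ.1 (Abelian.factorThruCoimage f)
  exact not_le.2 hslope (hZ.slopeLE_trans hA.1 (not_isZero_coimage hf) hB.1 hAC hCB)

end BridgelandNotes
end

section
/- Let 𝒜 be a noetherian abelian category and Z a stability function on 𝒜 such that the image of the generalized rank R = Im ∘ Z (over all objects of 𝒜) is a discrete subset of ℝ. Then for every object E of 𝒜 there exists a real number D_E such that D(F) ≤ D_E for every subobject F ⊆ E. -/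
open CategoryTheory CategoryTheory.Limits

namespace BridgelandNotes

variable {𝒜 : Type*} [Category 𝒜] [Abelian 𝒜]

/-! Discreteness of the rank at `0` gives `ε > 0` below every nonzero rank; induct on
`⌈R(X) / ε⌉`. If `X` has a subobject `F₀` with `0 < R(F₀) < R(X)`, every subobject `F` of `X`
is an extension of a subobject of `X / F₀` by the subobject `F ∩ F₀` of `F₀`, so `D(F)` is at
most the sum of the bounds for `F₀` and `X / F₀`, both of smaller rank. Otherwise every
subobject has rank `0` or `R(X)`. One of full rank has degree at most `D(X)`, as the quotient
has rank `0` and hence nonnegative degree. Those of rank `0` all lie in a maximal subobject `T`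
of rank `0`, which exists by noetherianity, so their degrees are at most `D(T)`. -/

section

variable {Z : 𝒜 → ℂ}

namespace AdditiveOnSES

variable (hZ : AdditiveOnSES Z)
include hZ

lemma apply_eq_zero_of_isZero {A : 𝒜} (hA : IsZero A) : Z A = 0 := by
  have hS : (ShortComplex.mk (0 : A ⟶ A) (0 : A ⟶ A) (by simp)).ShortExact :=
    { exact := ShortComplex.exact_of_isZero_X₂ _ hA
      mono_f := ⟨fun _ _ _ => hA.eq_of_tgt _ _⟩
      epi_g := ⟨fun _ _ _ => hA.eq_of_src _ _⟩ }
  exact left_eq_add.mp (hZ _ hS)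

lemma apply_eq_add_cokernel {A B : 𝒜} (f : A ⟶ B) [Mono f] :
    Z B = Z A + Z (cokernel f) :=
  hZ (ShortComplex.mk f (cokernel.π f) (cokernel.condition f))
    { exact := ShortComplex.exact_of_g_is_cokernel _ (cokernelIsCokernel f) }

lemma apply_congr_iso {A B : 𝒜} (e : A ≅ B) : Z A = Z B := by
  rw [hZ.apply_eq_add_cokernel e.hom,
    hZ.apply_eq_zero_of_isZero ((isZero_zero 𝒜).of_iso (cokernel.ofEpi e.hom)), add_zero]

lemma apply_eq_kernel_add_image {A B : 𝒜} (g : A ⟶ B) :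
    Z A = Z (kernel g) + Z (Abelian.image g) := by
  rw [hZ.apply_eq_add_cokernel (kernel.ι g), hZ.apply_congr_iso (Abelian.coimageIsoImage g)]

lemma apply_biprod (A B : 𝒜) : Z (A ⊞ B) = Z A + Z B := by
  rw [hZ.apply_eq_add_cokernel biprod.inl, hZ.apply_congr_iso cokernelBiprodInlIso]

lemma genR_eq_zero_of_isZero {A : 𝒜} (hA : IsZero A) : genR Z A = 0 := by
  simp [genR, hZ.apply_eq_zero_of_isZero hA]

lemma genR_eq_add_cokernel {A B : 𝒜} (f : A ⟶ B) [Mono f] :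
    genR Z B = genR Z A + genR Z (cokernel f) := by
  simp [genR, hZ.apply_eq_add_cokernel f]

lemma genD_eq_add_cokernel {A B : 𝒜} (f : A ⟶ B) [Mono f] :
    genD Z B = genD Z A + genD Z (cokernel f) := by
  simp only [genD, hZ.apply_eq_add_cokernel f, Complex.add_re]
  ring

lemma genD_eq_kernel_add_image {A B : 𝒜} (g : A ⟶ B) :
    genD Z A = genD Z (kernel g) + genD Z (Abelian.image g) := by
  simp only [genD, hZ.apply_eq_kernel_add_image g, Complex.add_re]
  ring

lemma apply_underlying_mk {A B : 𝒜} (f : A ⟶ B) [Mono f] :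
    Z (Subobject.mk f : 𝒜) = Z A :=
  hZ.apply_congr_iso (Subobject.underlyingIso f)

lemma genD_le_of_mono_of_forall_subobject {X : 𝒜} {M : ℝ}
    (hM : ∀ F : Subobject X, genD Z (F : 𝒜) ≤ M) {K : 𝒜} (m : K ⟶ X) [Mono m] :
    genD Z K ≤ M := by
  simpa [genD, hZ.apply_underlying_mk] using hM (Subobject.mk m)

end AdditiveOnSES

namespace IsStabilityFunction

variable (hZ : IsStabilityFunction Z)
include hZ

lemma additive : AdditiveOnSES Z := hZ.1

lemma genR_nonneg (A : 𝒜) : 0 ≤ genR Z A := by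
  by_cases hA : IsZero A
  · exact (hZ.additive.genR_eq_zero_of_isZero hA).ge
  · exact (hZ.2 A hA).1

lemma genD_nonneg_of_genR_eq_zero {A : 𝒜} (h : genR Z A = 0) : 0 ≤ genD Z A := by
  by_cases hA : IsZero A
  · simp [genD, hZ.additive.apply_eq_zero_of_isZero hA]
  · simpa [genD] using ((hZ.2 A hA).2 h).le

lemma genR_le_of_mono {A B : 𝒜} (f : A ⟶ B) [Mono f] : genR Z A ≤ genR Z B := by
  linarith [hZ.additive.genR_eq_add_cokernel f, hZ.genR_nonneg (cokernel f)]

lemma genD_le_of_mono_of_genR_eq {A B : 𝒜} (f : A ⟶ B) [Mono f] (h : genR Z A = genR Z B) :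
    genD Z A ≤ genD Z B := by
  have hR := hZ.additive.genR_eq_add_cokernel f
  have hQ := hZ.genD_nonneg_of_genR_eq_zero (A := cokernel f) (by linarith)
  linarith [hZ.additive.genD_eq_add_cokernel f]

/-- `S ⊔ T` lies in the image of `S ⊞ T ⟶ X`, a quotient of `S ⊞ T`. -/
lemma genR_sup_le {X : 𝒜} (S T : Subobject X) :
    genR Z ((S ⊔ T : Subobject X) : 𝒜) ≤ genR Z (S : 𝒜) + genR Z (T : 𝒜) := by
  let c : (S : 𝒜) ⊞ (T : 𝒜) ⟶ X := biprod.desc S.arrow T.arrow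
  have hsup : S ⊔ T ≤ Subobject.mk (Abelian.image.ι c) := by
    refine sup_le (Subobject.le_mk_of_comm (biprod.inl ≫ Abelian.factorThruImage c) ?_)
      (Subobject.le_mk_of_comm (biprod.inr ≫ Abelian.factorThruImage c) ?_) <;> simp [c]
  have hle := hZ.genR_le_of_mono (Subobject.ofLE _ _ hsup)
  have hc := congrArg Complex.im (hZ.additive.apply_eq_kernel_add_image c)
  have hker := hZ.genR_nonneg (kernel c)
  simp only [genR, hZ.additive.apply_underlying_mk, hZ.additive.apply_biprod,
    Complex.add_im] at hle hc hker ⊢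
  linarith

end IsStabilityFunction

lemma NoetherianCategory.wellFoundedGT (h : NoetherianCategory 𝒜) (X : 𝒜) :
    WellFoundedGT (Subobject X) :=
  wellFoundedGT_iff_monotone_chain_condition.2 fun f =>
    (h X f).imp fun _ hN n hn => (hN n hn).symm

def SubobjectDegreesBddAbove (Z : 𝒜 → ℂ) (X : 𝒜) : Prop :=
  ∃ M : ℝ, ∀ F : Subobject X, genD Z (F : 𝒜) ≤ M

namespace SubobjectDegreesBddAbove

lemma of_subobject_of_cokernel (hZ : AdditiveOnSES Z) {X : 𝒜} (F₀ : Subobject X)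
    (h₁ : SubobjectDegreesBddAbove Z (F₀ : 𝒜))
    (h₂ : SubobjectDegreesBddAbove Z (cokernel F₀.arrow)) :
    SubobjectDegreesBddAbove Z X := by
  obtain ⟨M₁, hM₁⟩ := h₁
  obtain ⟨M₂, hM₂⟩ := h₂
  refine ⟨M₁ + M₂, fun F => ?_⟩
  let g : (F : 𝒜) ⟶ cokernel F₀.arrow := F.arrow ≫ cokernel.π F₀.arrow
  let m : kernel g ⟶ (F₀ : 𝒜) :=
    Abelian.monoLift F₀.arrow (kernel.ι g ≫ F.arrow) (by simp [g])
  have : Mono m := mono_of_mono_fac (Abelian.monoLift_comp _ _ _)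
  linarith [hZ.genD_eq_kernel_add_image g, hZ.genD_le_of_mono_of_forall_subobject hM₁ m,
    hZ.genD_le_of_mono_of_forall_subobject hM₂ (Abelian.image.ι g)]

lemma of_genR_eq_zero_or_eq (hZ : IsStabilityFunction Z) (hNoeth : NoetherianCategory 𝒜)
    {X : 𝒜} (h : ∀ F : Subobject X, genR Z (F : 𝒜) = 0 ∨ genR Z (F : 𝒜) = genR Z X) :
    SubobjectDegreesBddAbove Z X := by
  have := hNoeth.wellFoundedGT X
  have hbot : genR Z ((⊥ : Subobject X) : 𝒜) = 0 :=
    hZ.additive.genR_eq_zero_of_isZero ((isZero_zero 𝒜).of_iso Subobject.botCoeIsoZero)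
  obtain ⟨T, hT, hTmax⟩ :=
    wellFounded_gt.has_min {F : Subobject X | genR Z (F : 𝒜) = 0} ⟨⊥, hbot⟩
  refine ⟨max (genD Z X) (genD Z (T : 𝒜)), fun F => ?_⟩
  rcases h F with hF | hF
  · have hsup : genR Z ((F ⊔ T : Subobject X) : 𝒜) = 0 := by
      have hT' : genR Z (T : 𝒜) = 0 := hT
      linarith [hZ.genR_sup_le F T, hZ.genR_nonneg ((F ⊔ T : Subobject X) : 𝒜)]
    have hFT : F ≤ T := sup_eq_right.mp (le_sup_right.eq_of_not_lt (hTmax _ hsup)).symm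
    exact (hZ.genD_le_of_mono_of_genR_eq (Subobject.ofLE F T hFT) (hF.trans hT.symm)).trans
      (le_max_right _ _)
  · exact (hZ.genD_le_of_mono_of_genR_eq F.arrow hF).trans (le_max_left _ _)

end SubobjectDegreesBddAbove

open scoped ZeroObject in
lemma HasDiscreteRank.exists_pos_le_genR (hDisc : HasDiscreteRank Z)
    (hZ : IsStabilityFunction Z) : ∃ ε > 0, ∀ A : 𝒜, genR Z A ≠ 0 → ε ≤ genR Z A := by
  obtain ⟨ε, hε, hsep⟩ := hDisc 0 ⟨0, hZ.additive.genR_eq_zero_of_isZero (isZero_zero 𝒜)⟩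
  refine ⟨ε, hε, fun A hA => not_lt.mp fun hlt => hA (hsep _ ⟨A, rfl⟩ ?_)⟩
  rwa [sub_zero, abs_of_nonneg (hZ.genR_nonneg A)]

lemma subobjectDegreesBddAbove_of_genR_le (hZ : IsStabilityFunction Z)
    (hNoeth : NoetherianCategory 𝒜) {ε : ℝ} (hε : ∀ A : 𝒜, genR Z A ≠ 0 → ε ≤ genR Z A)
    (n : ℕ) : ∀ X : 𝒜, genR Z X ≤ n * ε → SubobjectDegreesBddAbove Z X := by
  induction n with
  | zero =>
    intro X hX
    refine .of_genR_eq_zero_or_eq hZ hNoeth fun F => Or.inl ?_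
    push_cast at hX
    linarith [hZ.genR_le_of_mono F.arrow, hZ.genR_nonneg (F : 𝒜)]
  | succ n ih =>
    intro X hX
    push_cast at hX
    by_cases hsplit : ∃ F₀ : Subobject X, 0 < genR Z (F₀ : 𝒜) ∧ genR Z (F₀ : 𝒜) < genR Z X
    · obtain ⟨F₀, hpos, hlt⟩ := hsplit
      have hsum := hZ.additive.genR_eq_add_cokernel F₀.arrow
      have h₁ := hε _ hpos.ne'
      have h₂ := hε (cokernel F₀.arrow) (ne_of_gt (by linarith))
      exact .of_subobject_of_cokernel hZ.additive F₀ (ih _ (by linarith)) (ih _ (by linarith))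
    · push Not at hsplit
      refine .of_genR_eq_zero_or_eq hZ hNoeth fun F => ?_
      rcases (hZ.genR_nonneg (F : 𝒜)).eq_or_lt with h0 | hpos
      · exact Or.inl h0.symm
      · exact Or.inr (le_antisymm (hZ.genR_le_of_mono F.arrow) (hsplit F hpos))

end

/-- If `𝒜` is noetherian and the image of the generalized rank is discrete in `ℝ`,
then for every object `E` the generalized degrees of subobjects of `E` are bounded
from above. -/
theorem degree_bounded (Z : 𝒜 → ℂ) (hZ : IsStabilityFunction Z)
    (hNoeth : NoetherianCategory 𝒜) (hDisc : HasDiscreteRank Z) (E : 𝒜) :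
    ∃ DE : ℝ, ∀ F : Subobject E, genD Z (F : 𝒜) ≤ DE := by
  obtain ⟨ε, hε, hmin⟩ := hDisc.exists_pos_le_genR hZ
  obtain ⟨n, hn⟩ := exists_nat_ge (genR Z E / ε)
  exact subobjectDegreesBddAbove_of_genR_le hZ hNoeth hmin n E ((div_le_iff₀ hε).mp hn)

end BridgelandNotes
end

section
/- Let 𝒜 be a noetherian abelian category and Z a stability function on 𝒜 such that the image of the generalized rank R = Im ∘ Z (over all objects of 𝒜) is a discrete subset of ℝ. Then every nonzero object E of 𝒜 admits a Harder–Narasimhan filtration: a finite chain of subobjects 0 = E₀ ⊊ E₁ ⊊ … ⊊ Eₙ = E such that each subquotient A_i = E_i/E_{i−1} is Z-semistable and μ(A₁) > μ(A₂) > … > μ(Aₙ). -/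
open CategoryTheory CategoryTheory.Limits

namespace BridgelandNotes

variable {𝒜 : Type*} [Category 𝒜] [Abelian 𝒜]

section AuxZ
open ZeroObject
section ZL
variable {Z : 𝒜 → ℂ} (hZ : AdditiveOnSES Z)

include hZ in
lemma Z_of_isZero {X : 𝒜} (hX : IsZero X) : Z X = 0 := by
  have hf0 : (𝟙 X) ≫ (𝟙 X) = 0 := hX.eq_of_src _ _
  have hse : (ShortComplex.mk (𝟙 X) (𝟙 X) hf0).ShortExact := by
    refine ⟨?_⟩
    rw [ShortComplex.exact_iff_mono _ (hX.eq_of_src _ _)]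
    exact inferInstanceAs (Mono (𝟙 X))
  have := hZ _ hse
  dsimp at this
  linear_combination -this

include hZ in
lemma Z_iso {X Y : 𝒜} (e : X ≅ Y) : Z X = Z Y := by
  have hmono : Mono (0 : (0 : 𝒜) ⟶ X) :=
    ⟨fun f g _ => (isZero_zero 𝒜).eq_of_tgt f g⟩
  have hse : (ShortComplex.mk (0 : (0 : 𝒜) ⟶ X) e.hom (zero_comp)).ShortExact := by
    refine ⟨?_⟩
    rw [ShortComplex.exact_iff_mono _ rfl]
    exact inferInstanceAs (Mono e.hom)
  have h := hZ _ hse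
  dsimp at h
  rw [Z_of_isZero hZ (isZero_zero 𝒜)] at h
  linear_combination h

include hZ in
lemma Z_subquot {E : 𝒜} (A B : Subobject E) (h : A ≤ B) :
    Z (subquot A B h) = Z (B : 𝒜) - Z (A : 𝒜) := by
  have hse : (ShortComplex.mk (Subobject.ofLE A B h) (cokernel.π _)
      (cokernel.condition _)).ShortExact := by
    refine ⟨?_⟩
    exact ShortComplex.exact_of_g_is_cokernel _ (cokernelIsCokernel _)
  have := hZ _ hse
  dsimp at this
  rw [show cokernel (Subobject.ofLE A B h) = subquot A B h from rfl] at this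
  linear_combination -this

lemma subquot_not_isZero {E : 𝒜} {A B : Subobject E} (h : A < B) :
    ¬ IsZero (subquot A B h.le) := by
  intro hz
  have hπ : cokernel.π (Subobject.ofLE A B h.le) = 0 := hz.eq_of_tgt _ _
  have hepi : Epi (Subobject.ofLE A B h.le) :=
    Abelian.epi_of_cokernel_π_eq_zero _ hπ
  have : IsIso (Subobject.ofLE A B h.le) := isIso_of_mono_of_epi _
  have hBA : B ≤ A := by
    refine Subobject.le_of_comm (inv (Subobject.ofLE A B h.le)) ?_
    rw [IsIso.inv_comp_eq, Subobject.ofLE_arrow]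
  exact absurd (le_antisymm h.le hBA) h.ne

end ZL

section ZMod
variable {Z : 𝒜 → ℂ} (hZ : AdditiveOnSES Z)
include hZ in
lemma Z_biprod (X Y : 𝒜) : Z (X ⊞ Y) = Z X + Z Y := by
  have hw : (biprod.inl : X ⟶ X ⊞ Y) ≫ biprod.snd = 0 := biprod.inl_snd
  have hse : (ShortComplex.mk (biprod.inl : X ⟶ X ⊞ Y) biprod.snd hw).ShortExact := by
    refine ⟨?_⟩
    apply ShortComplex.exact_of_f_is_kernel
    refine KernelFork.IsLimit.ofι' _ _ (fun {A} k hk => ⟨k ≫ biprod.fst, ?_⟩)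
    apply biprod.hom_ext <;> simp [hk]
  have := hZ _ hse
  dsimp at this
  linear_combination this

include hZ in
lemma Z_modular {E : 𝒜} (A B : Subobject E) :
    Z (((A ⊔ B : Subobject E) : 𝒜)) + Z (((A ⊓ B : Subobject E) : 𝒜))
      = Z ((A : 𝒜)) + Z ((B : 𝒜)) := by
  set i : ((A ⊓ B : Subobject E) : 𝒜) ⟶ (A : 𝒜) ⊞ (B : 𝒜) :=
    biprod.lift (Subobject.ofLE _ A inf_le_left) (-(Subobject.ofLE _ B inf_le_right)) with hi
  set p : (A : 𝒜) ⊞ (B : 𝒜) ⟶ ((A ⊔ B : Subobject E) : 𝒜) :=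
    biprod.desc (Subobject.ofLE A _ le_sup_left) (Subobject.ofLE B _ le_sup_right) with hp
  have hw : i ≫ p = 0 := by
    simp [hi, hp, biprod.lift_desc, Subobject.ofLE_comp_ofLE]
  have hifst : i ≫ biprod.fst = Subobject.ofLE _ A inf_le_left := biprod.lift_fst _ _
  have hmono : Mono i := by
    have : Mono (i ≫ biprod.fst) := by rw [hifst]; infer_instance
    exact mono_of_mono i biprod.fst
  have hparrow : p ≫ (A ⊔ B).arrow = biprod.desc A.arrow B.arrow := by
    apply biprod.hom_ext' <;> simp [hp, Subobject.ofLE_arrow]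
  have hepi : Epi p := by
    apply Preadditive.epi_of_cancel_zero
    intro T t ht
    have hA : Subobject.ofLE A (A ⊔ B) le_sup_left ≫ t = 0 := by
      have := biprod.inl ≫= ht
      simpa [hp] using this
    have hB : Subobject.ofLE B (A ⊔ B) le_sup_right ≫ t = 0 := by
      have := biprod.inr ≫= ht
      simpa [hp] using this
    have hle : A ⊔ B ≤ Subobject.mk (kernel.ι t ≫ (A ⊔ B).arrow) := by
      apply sup_le
      · exact Subobject.le_mk_of_comm (kernel.lift t _ hA)
          (by rw [← Category.assoc, kernel.lift_ι, Subobject.ofLE_arrow])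
      · exact Subobject.le_mk_of_comm (kernel.lift t _ hB)
          (by rw [← Category.assoc, kernel.lift_ι, Subobject.ofLE_arrow])
    have hu := Subobject.ofLEMk_comp hle
    set u := Subobject.ofLEMk (A ⊔ B) (kernel.ι t ≫ (A ⊔ B).arrow) hle with hudef
    have huι : u ≫ kernel.ι t = 𝟙 _ := by
      have h9 : (u ≫ kernel.ι t) ≫ (A ⊔ B).arrow = 𝟙 _ ≫ (A ⊔ B).arrow := by
        rw [Category.assoc, hu, Category.id_comp]
      exact (cancel_mono _).1 h9
    calc t = 𝟙 _ ≫ t := (Category.id_comp t).symm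
    _ = (u ≫ kernel.ι t) ≫ t := by rw [huι]
    _ = u ≫ kernel.ι t ≫ t := Category.assoc _ _ _
    _ = 0 := by rw [kernel.condition, comp_zero]
  have hse : (ShortComplex.mk i p hw).ShortExact := by
    refine ⟨?_⟩
    apply ShortComplex.exact_of_f_is_kernel
    refine KernelFork.IsLimit.ofι' _ _ (fun {T} k hk => ?_)
    have h2 : (k ≫ biprod.fst) ≫ A.arrow + (k ≫ biprod.snd) ≫ B.arrow = 0 := by
      have h3 := hk =≫ (A ⊔ B).arrow
      dsimp at h3
      rw [Category.assoc, hparrow, zero_comp] at h3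
      have h4 : biprod.desc A.arrow B.arrow
          = biprod.fst ≫ A.arrow + biprod.snd ≫ B.arrow := by
        apply biprod.hom_ext' <;> simp
      rw [h4, Preadditive.comp_add] at h3
      simpa [Category.assoc] using h3
    have hAA : (k ≫ biprod.fst) ≫ A.arrow = -((k ≫ biprod.snd) ≫ B.arrow) :=
      eq_neg_of_add_eq_zero_left h2
    have hfac : (A ⊓ B : Subobject E).Factors ((k ≫ biprod.fst) ≫ A.arrow) := by
      rw [Subobject.inf_factors]
      refine ⟨(Subobject.factors_iff _ _).mpr ⟨k ≫ biprod.fst, rfl⟩,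
        (Subobject.factors_iff _ _).mpr ⟨-(k ≫ biprod.snd), ?_⟩⟩
      exact (Preadditive.neg_comp _ _).trans hAA.symm
    refine ⟨(A ⊓ B : Subobject E).factorThru _ hfac, ?_⟩
    show (A ⊓ B : Subobject E).factorThru _ hfac ≫ i = k
    apply biprod.hom_ext
    · rw [Category.assoc, hifst]
      apply (cancel_mono A.arrow).1
      rw [Category.assoc, Subobject.ofLE_arrow, Subobject.factorThru_arrow]
    · have hisnd : i ≫ biprod.snd = -(Subobject.ofLE _ B inf_le_right) := biprod.lift_snd _ _
      rw [Category.assoc, hisnd]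
      apply (cancel_mono B.arrow).1
      rw [Category.assoc, Preadditive.neg_comp, Subobject.ofLE_arrow,
        Preadditive.comp_neg, Subobject.factorThru_arrow, hAA, neg_neg]
  have h1 := hZ _ hse
  have h2 := Z_biprod hZ ((A : 𝒜)) ((B : 𝒜))
  dsimp at h1
  linear_combination h2 - h1


end ZMod

/-- Key correspondence: a subobject of a subquotient `B/A` comes from some
`C` with `A ≤ C ≤ B`, up to isomorphism identified with `C/A`. -/
lemma corr {E : 𝒜} {A B : Subobject E} (h : A ≤ B) (G : 𝒜) (f : G ⟶ subquot A B h)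
    [Mono f] : ∃ (C : Subobject E) (hAC : A ≤ C) (_ : C ≤ B),
      Nonempty (cokernel (Subobject.ofLE A C hAC) ≅ G) := by
  set π : (B : 𝒜) ⟶ subquot A B h := cokernel.π (Subobject.ofLE A B h) with hπ
  haveI hsndm : Mono (pullback.snd f π ≫ B.arrow) := mono_comp _ _
  set C : Subobject E := Subobject.mk (pullback.snd f π ≫ B.arrow) with hC
  have hu0 : (0 : (A : 𝒜) ⟶ G) ≫ f = Subobject.ofLE A B h ≫ π := by
    rw [zero_comp, hπ]; exact (cokernel.condition _).symm
  set u : (A : 𝒜) ⟶ pullback f π := pullback.lift 0 (Subobject.ofLE A B h) hu0 with hudef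
  have husnd : u ≫ pullback.snd f π = Subobject.ofLE A B h := pullback.lift_snd _ _ _
  have hufst : u ≫ pullback.fst f π = 0 := pullback.lift_fst _ _ _
  have humono : Mono u := by
    have : Mono (u ≫ pullback.snd f π) := by rw [husnd]; infer_instance
    exact mono_of_mono u (pullback.snd f π)
  have hAC : A ≤ C := by
    rw [hC]
    refine Subobject.le_mk_of_comm (f := pullback.snd f π ≫ B.arrow) u ?_
    rw [← Category.assoc, husnd, Subobject.ofLE_arrow]
  have hCB : C ≤ B := by
    rw [hC]
    have := Subobject.mk_le_mk_of_comm (f₁ := pullback.snd f π ≫ B.arrow)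
      (f₂ := B.arrow) (pullback.snd f π) rfl
    rw [Subobject.mk_arrow] at this
    exact this
  -- A (via u) is the kernel of pullback.fst
  have hkerfst : IsLimit (KernelFork.ofι u hufst) := by
    refine KernelFork.IsLimit.ofι' _ _ (fun {W} k hk => ?_)
    have hw : (k ≫ pullback.snd f π) ≫ cokernel.π (Subobject.ofLE A B h) = 0 := by
      show (k ≫ pullback.snd f π) ≫ π = 0
      rw [Category.assoc, ← pullback.condition, ← Category.assoc, hk, zero_comp]
    set l : W ⟶ (A : 𝒜) := Abelian.monoLift _ _ hw with hl
    have hfac : l ≫ Subobject.ofLE A B h = k ≫ pullback.snd f π :=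
      Abelian.monoLift_comp _ _ hw
    refine ⟨l, ?_⟩
    apply (cancel_mono (pullback.snd f π)).1
    rw [Category.assoc, husnd, hfac]
  -- fst is the cokernel of u
  haveI : Epi π := (inferInstance : Epi (cokernel.π (Subobject.ofLE A B h)))
  have hcofork : IsColimit (CokernelCofork.ofπ (pullback.fst f π) hufst) :=
    Abelian.epiIsCokernelOfKernel _ hkerfst
  have e1 : cokernel u ≅ G :=
    (cokernelIsCokernel u).coconePointUniqueUpToIso hcofork
  -- cokernel (ofLE A C) ≅ cokernel u
  have hsq : Subobject.ofLE A C hAC ≫ (Subobject.underlyingIso _).hom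
      = (Iso.refl ((A : 𝒜))).hom ≫ u := by
    rw [Iso.refl_hom, Category.id_comp]
    apply (cancel_mono (pullback.snd f π ≫ B.arrow)).1
    rw [Category.assoc, Subobject.underlyingIso_hom_comp_eq_mk, ← Category.assoc,
      husnd, Subobject.ofLE_arrow]
    exact (Subobject.ofLE_arrow _).symm
  have e2 : cokernel (Subobject.ofLE A C hAC) ≅ cokernel u :=
    cokernel.mapIso _ u (Iso.refl _) (Subobject.underlyingIso _) hsq
  exact ⟨C, hAC, hCB, ⟨e2.trans e1⟩⟩


end AuxZ

section AuxLattice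



noncomputable def DD (w : ℂ) : ℝ := -w.re
noncomputable def RR (w : ℂ) : ℝ := w.im
def CrossLE (x y : ℂ) : Prop := DD x * RR y ≤ DD y * RR x
def CrossLT (x y : ℂ) : Prop := DD x * RR y < DD y * RR x
def GoodVec (w : ℂ) : Prop := 0 ≤ RR w ∧ (RR w = 0 → 0 < DD w)

lemma not_crossLE {x y : ℂ} : ¬ CrossLE x y ↔ CrossLT y x := by
  unfold CrossLE CrossLT; exact not_le

lemma crossLE_refl (x : ℂ) : CrossLE x x := le_refl _

lemma DD_zero : DD 0 = 0 := by unfold DD; simp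
lemma RR_zero : RR 0 = 0 := by unfold RR; simp

lemma crossLE_trans {x y z : ℂ} (hx : GoodVec x) (hy : GoodVec y) (hz : GoodVec z)
    (h1 : CrossLE x y) (h2 : CrossLE y z) : CrossLE x z := by
  unfold CrossLE at *
  rcases eq_or_lt_of_le hy.1 with h0 | h0
  · have hy0 : RR y = 0 := h0.symm
    have hDy : 0 < DD y := hy.2 hy0
    rw [hy0, mul_zero] at h1 h2
    have hz0 : RR z = 0 := le_antisymm (by nlinarith [hz.1]) hz.1
    have hDz : 0 < DD z := hz.2 hz0
    rw [hz0, mul_zero]; nlinarith [hx.1]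
  · nlinarith [hx.1, hz.1, mul_le_mul_of_nonneg_right h1 hz.1]

lemma crossLE_of_le_lt {x y z : ℂ} (hx : GoodVec x) (hy : GoodVec y) (hz : GoodVec z)
    (h1 : CrossLE x y) (h2 : CrossLT y z) : CrossLE x z :=
  crossLE_trans hx hy hz h1 h2.le

variable {𝒜 : Type*} [Category 𝒜] [Abelian 𝒜]

noncomputable def sq (Z : 𝒜 → ℂ) {E : 𝒜} (A B : Subobject E) : ℂ :=
  Z ((B : 𝒜)) - Z ((A : 𝒜))

def SemiLat (Z : 𝒜 → ℂ) {E : 𝒜} (a b : Subobject E) : Prop :=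
  ∀ C, a ≤ C → C ≤ b → CrossLE (sq Z a C) (sq Z a b)

def Tset (Z : 𝒜 → ℂ) {E : 𝒜} (a : Subobject E) (θ : ℝ) : Set (Subobject E) :=
  {X | a < X ∧ ∀ C, a ≤ C → C < X → θ * RR (sq Z C X) ≤ DD (sq Z C X)}

structure LCtx (Z : 𝒜 → ℂ) (E : 𝒜) (ε : ℝ) : Prop where
  heps : 0 < ε
  him : ∀ {A B : Subobject E}, A ≤ B → 0 ≤ RR (sq Z A B)
  hD0 : ∀ {A B : Subobject E}, A < B → RR (sq Z A B) = 0 → 0 < DD (sq Z A B)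
  hgap : ∀ {A B : Subobject E}, A ≤ B → RR (sq Z A B) = 0 ∨ ε ≤ RR (sq Z A B)
  hmod : ∀ A B : Subobject E,
    Z (((A ⊔ B : Subobject E) : 𝒜)) + Z (((A ⊓ B : Subobject E) : 𝒜))
      = Z ((A : 𝒜)) + Z ((B : 𝒜))
  hnoch : ∀ f : ℕ → Subobject E, ¬ (∀ n, f n < f (n + 1))

namespace LCtx

variable {Z : 𝒜 → ℂ} {E : 𝒜} {ε : ℝ} (hc : LCtx Z E ε)

omit [Abelian 𝒜] in
lemma sq_add (A B C : Subobject E) : sq Z A C = sq Z A B + sq Z B C := by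
  unfold sq; ring

omit [Abelian 𝒜] in
lemma sq_self (A : Subobject E) : sq Z A A = 0 := by unfold sq; ring

include hc in
lemma sq_sup (C X : Subobject E) : sq Z C (C ⊔ X) = sq Z (C ⊓ X) X := by
  unfold sq; linear_combination (hc.hmod C X)

include hc in
lemma good {A B : Subobject E} (h : A < B) : GoodVec (sq Z A B) :=
  ⟨hc.him h.le, hc.hD0 h⟩

omit hc [Abelian 𝒜] in
lemma RR_add_of_le (A B C : Subobject E) :
    RR (sq Z A C) = RR (sq Z A B) + RR (sq Z B C) := by
  rw [sq_add (B := B)]; exact Complex.add_im _ _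

omit hc [Abelian 𝒜] in
lemma DD_add_of_le (A B C : Subobject E) :
    DD (sq Z A C) = DD (sq Z A B) + DD (sq Z B C) := by
  rw [sq_add (B := B)]; unfold DD; simp [Complex.add_re]; ring

include hc in
lemma maximal (S : Set (Subobject E)) (hne : S.Nonempty) :
    ∃ m ∈ S, ∀ x ∈ S, ¬ m < x := by
  by_contra hcon
  push_neg at hcon
  obtain ⟨a0, ha0⟩ := hne
  have step : ∀ x : {y // y ∈ S}, {y // y ∈ S ∧ x.1 < y} := fun x =>
    ⟨(hcon x.1 x.2).choose, (hcon x.1 x.2).choose_spec⟩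
  let f : ℕ → {y // y ∈ S} := fun n =>
    Nat.rec ⟨a0, ha0⟩ (fun _ p => ⟨(step p).1, (step p).2.1⟩) n
  exact hc.hnoch (fun n => (f n).1) (fun n => (step (f n)).2.2)

include hc in
lemma greatest (S : Set (Subobject E)) (hne : S.Nonempty)
    (hjoin : ∀ x ∈ S, ∀ y ∈ S, x ⊔ y ∈ S) :
    ∃ g ∈ S, ∀ x ∈ S, x ≤ g := by
  obtain ⟨m, hm, hmax⟩ := hc.maximal S hne
  refine ⟨m, hm, fun x hx => ?_⟩
  have hsup := hjoin m hm x hx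
  have hnlt : ¬ m < m ⊔ x := hmax _ hsup
  have hle : m ⊔ x ≤ m := by
    rcases lt_or_eq_of_le (le_sup_left : m ≤ m ⊔ x) with h | h
    · exact absurd h hnlt
    · exact h.ge
  exact le_trans le_sup_right hle

include hc in
lemma rank_stab (f : ℕ → Subobject E) (hf : ∀ n, f (n + 1) ≤ f n) :
    ∃ N, ∀ n, N ≤ n → RR (sq Z (f n) (f N)) = 0 := by
  by_contra hcon
  push_neg at hcon
  have hant : ∀ {m n : ℕ}, m ≤ n → f n ≤ f m := by
    intro m n h
    induction h with
    | refl => exact le_rfl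
    | step _ ih => exact le_trans (hf _) ih
  have key : ∀ N, ∃ n, N ≤ n ∧ ε ≤ RR (sq Z (f n) (f N)) := by
    intro N
    obtain ⟨n, hNn, hne⟩ := hcon N
    rcases hc.hgap (hant hNn) with h | h
    · exact absurd h hne
    · exact ⟨n, hNn, h⟩
  have iter : ∀ k : ℕ, ∃ n, (k : ℝ) * ε ≤ RR (sq Z (f n) (f 0)) := by
    intro k
    induction k with
    | zero => exact ⟨0, by simp [sq_self, RR_zero]⟩
    | succ k ih =>
      obtain ⟨n, hn⟩ := ih
      obtain ⟨m, hnm, hm⟩ := key n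
      refine ⟨m, ?_⟩
      have hsplit := RR_add_of_le (Z := Z) (f m) (f n) (f 0)
      push_cast
      linarith
  obtain ⟨k, hk⟩ := exists_nat_gt (RR (sq Z (⊥ : Subobject E) (f 0)) / ε)
  obtain ⟨n, hn⟩ := iter k
  have hb : RR (sq Z (f n) (f 0)) ≤ RR (sq Z (⊥ : Subobject E) (f 0)) := by
    have h1 := RR_add_of_le (Z := Z) (⊥ : Subobject E) (f n) (f 0)
    have h2 := hc.him (bot_le : (⊥ : Subobject E) ≤ f n)
    linarith
  have : RR (sq Z (⊥ : Subobject E) (f 0)) < k * ε := by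
    rw [div_lt_iff₀ hc.heps] at hk
    linarith
  linarith

include hc in
lemma ndi (a : Subobject E) (f : ℕ → Subobject E) (hge : ∀ n, a ≤ f n)
    (hlt : ∀ n, f (n + 1) < f n)
    (hsl : ∀ n, CrossLT (sq Z a (f n)) (sq Z a (f (n + 1)))) : False := by
  obtain ⟨N, hN⟩ := hc.rank_stab f (fun n => (hlt n).le)
  have hy0 : RR (sq Z (f (N + 1)) (f N)) = 0 := hN (N + 1) (Nat.le_succ N)
  have hyD : 0 < DD (sq Z (f (N + 1)) (f N)) := hc.hD0 (hlt N) hy0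
  have h := hsl N
  unfold CrossLT at h
  rw [RR_add_of_le (Z := Z) a (f (N+1)) (f N), DD_add_of_le (Z := Z) a (f (N+1)) (f N), hy0] at h
  have hx : 0 ≤ RR (sq Z a (f (N + 1))) := hc.him (hge (N + 1))
  nlinarith [h, hx, hyD]

include hc in
lemma shrink {a X : Subobject E} (hX : a < X) :
    ∃ u, a < u ∧ u ≤ X ∧ SemiLat Z a u ∧ CrossLE (sq Z a X) (sq Z a u) := by
  by_contra hcon
  push_neg at hcon
  have step : ∀ u : Subobject E, a < u → u ≤ X → CrossLE (sq Z a X) (sq Z a u) →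
      ∃ v, (a < v ∧ v ≤ X ∧ CrossLE (sq Z a X) (sq Z a v)) ∧ v < u ∧
        CrossLT (sq Z a u) (sq Z a v) := by
    intro u h1 h2 h3
    have hns : ¬ SemiLat Z a u := fun hs => hcon u h1 h2 hs h3
    unfold SemiLat at hns
    push_neg at hns
    obtain ⟨C, haC, hCu, hfail⟩ := hns
    rw [not_crossLE] at hfail
    have hCa : C ≠ a := by
      rintro rfl
      rw [sq_self] at hfail
      unfold CrossLT at hfail
      rw [DD_zero, RR_zero] at hfail
      simp at hfail
    have haltC : a < C := lt_of_le_of_ne haC (Ne.symm hCa)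
    have hCneu : C ≠ u := by
      rintro rfl
      exact absurd hfail (lt_irrefl _)
    have hCltu : C < u := lt_of_le_of_ne hCu hCneu
    exact ⟨C, ⟨haltC, hCu.trans h2, crossLE_of_le_lt (hc.good hX) (hc.good h1)
      (hc.good haltC) h3 hfail⟩, hCltu, hfail⟩
  -- build a decreasing chain contradicting ndi
  let St := {u : Subobject E // a < u ∧ u ≤ X ∧ CrossLE (sq Z a X) (sq Z a u)}
  have step' : ∀ p : St, ∃ q : St, q.1 < p.1 ∧ CrossLT (sq Z a p.1) (sq Z a q.1) := by
    rintro ⟨u, h1, h2, h3⟩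
    obtain ⟨v, hv, hlt, hsl⟩ := step u h1 h2 h3
    exact ⟨⟨v, hv⟩, hlt, hsl⟩
  choose F hF1 hF2 using step'
  let f : ℕ → St := fun n => Nat.rec ⟨X, hX, le_rfl, crossLE_refl _⟩ (fun _ p => F p) n
  exact hc.ndi a (fun n => (f n).1) (fun n => (f n).2.1.le) (fun n => hF1 (f n))
    (fun n => hF2 (f n))

end LCtx

namespace LCtx
variable {𝒜 : Type*} [Category 𝒜] [Abelian 𝒜]
variable {Z : 𝒜 → ℂ} {E : 𝒜} {ε : ℝ} (hc : LCtx Z E ε)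

omit [Abelian 𝒜] hc in
lemma RR_addc (x y : ℂ) : RR (x + y) = RR x + RR y := Complex.add_im _ _
omit [Abelian 𝒜] hc in
lemma DD_addc (x y : ℂ) : DD (x + y) = DD x + DD y := by
  unfold DD; simp [Complex.add_re]; ring

include hc in
lemma T_join {a : Subobject E} {θ : ℝ} {X Y : Subobject E}
    (hX : X ∈ Tset Z a θ) (hY : Y ∈ Tset Z a θ) : X ⊔ Y ∈ Tset Z a θ := by
  refine ⟨lt_of_lt_of_le hX.1 le_sup_left, fun C haC hC => ?_⟩
  have hCle : C ≤ X ⊔ Y := hC.le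
  have e3 : (C ⊔ X) ⊔ Y = X ⊔ Y := by
    rw [sup_assoc, sup_eq_right.mpr hCle]
  have hkey : sq Z C (X ⊔ Y) = sq Z (C ⊓ X) X + sq Z ((C ⊔ X) ⊓ Y) Y := by
    have e1 : sq Z C (X ⊔ Y) = sq Z C (C ⊔ X) + sq Z (C ⊔ X) (X ⊔ Y) := sq_add _ _ _
    have e2 : sq Z C (C ⊔ X) = sq Z (C ⊓ X) X := hc.sq_sup C X
    have e4 : sq Z (C ⊔ X) (X ⊔ Y) = sq Z ((C ⊔ X) ⊓ Y) Y := by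
      conv_lhs => rw [← e3]
      exact hc.sq_sup _ Y
    rw [e1, e2, e4]
  have hb1 : θ * RR (sq Z (C ⊓ X) X) ≤ DD (sq Z (C ⊓ X) X) := by
    rcases eq_or_lt_of_le (inf_le_right : C ⊓ X ≤ X) with heq | hlt
    · rw [heq, sq_self, RR_zero, DD_zero]; simp
    · exact hX.2 _ (le_inf haC hX.1.le) hlt
  have hb2 : θ * RR (sq Z ((C ⊔ X) ⊓ Y) Y) ≤ DD (sq Z ((C ⊔ X) ⊓ Y) Y) := by
    rcases eq_or_lt_of_le (inf_le_right : (C ⊔ X) ⊓ Y ≤ Y) with heq | hlt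
    · rw [heq, sq_self, RR_zero, DD_zero]; simp
    · exact hY.2 _ (le_inf (haC.trans le_sup_left) hY.1.le) hlt
  rw [hkey, RR_addc, DD_addc]
  linarith

include hc in
lemma T_mono {a : Subobject E} {θ θ' : ℝ} (h : θ' ≤ θ) :
    Tset Z a θ ⊆ Tset Z a θ' := by
  rintro X ⟨h1, h2⟩
  refine ⟨h1, fun C haC hC => ?_⟩
  have hR : 0 ≤ RR (sq Z C X) := hc.him hC.le
  exact le_trans (mul_le_mul_of_nonneg_right h hR) (h2 C haC hC)

include hc in
/-- semistable with slope `> θ` implies membership in `Tset a θ` -/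
lemma semi_to_T {a u : Subobject E} {θ : ℝ} (hau : a < u) (hsemi : SemiLat Z a u)
    (hRw : 0 < RR (sq Z a u))
    (hθ : θ * RR (sq Z a u) < DD (sq Z a u)) : u ∈ Tset Z a θ := by
  refine ⟨hau, fun C haC hCu => ?_⟩
  rcases eq_or_lt_of_le haC with heq | haltC
  · subst heq
    exact hθ.le
  · have h1 := hsemi C haC hCu.le
    unfold CrossLE at h1
    have hR1 := RR_add_of_le (Z := Z) a C u
    have hD1 := DD_add_of_le (Z := Z) a C u
    have hRy : 0 ≤ RR (sq Z C u) := hc.him hCu.le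
    have hRx : 0 ≤ RR (sq Z a C) := hc.him haC
    by_contra hgoal
    push_neg at hgoal
    rcases eq_or_lt_of_le hRy with hy0 | hy0
    · have hDy : 0 < DD (sq Z C u) := hc.hD0 hCu hy0.symm
      rw [← hy0, mul_zero] at hgoal
      linarith
    · rw [hR1, hD1] at h1 hθ
      nlinarith [h1, hθ, hgoal, hRx, hRy, hy0, hRw,
        mul_lt_mul_of_pos_right hgoal hy0, mul_le_mul_of_nonneg_right hθ.le hRy]

end LCtx

namespace LCtx
variable {𝒜 : Type*} [Category 𝒜] [Abelian 𝒜]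
variable {Z : 𝒜 → ℂ} {E : 𝒜} {ε : ℝ} (hc : LCtx Z E ε)

include hc in
/-- Case (ii) step: if there is no rank-zero extension above `a`, there is a
maximal-slope, maximal semistable extension `b`. -/
lemma step_pos {a : Subobject E} (ha : a < ⊤)
    (hnr : ∀ X, a < X → RR (sq Z a X) ≠ 0) :
    ∃ b, a < b ∧ SemiLat Z a b ∧
      (∀ X, a < X → CrossLE (sq Z a X) (sq Z a b)) ∧
      (∀ X, b < X → CrossLT (sq Z a X) (sq Z a b)) := by
  classical
  have hre : ∀ X, a < X → ε ≤ RR (sq Z a X) := fun X h =>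
    (hc.hgap h.le).resolve_left (hnr X h)
  have hrpos : ∀ X, a < X → 0 < RR (sq Z a X) := fun X h =>
    lt_of_lt_of_le hc.heps (hre X h)
  set μf : Subobject E → ℝ := fun X => DD (sq Z a X) / RR (sq Z a X) with hμf
  set S : Set ℝ := μf '' {X | a < X} with hS
  have hSne : S.Nonempty := ⟨μf ⊤, ⟨⊤, ha, rfl⟩⟩
  have cross_iff : ∀ {X Y : Subobject E}, a < X → a < Y →
      (CrossLE (sq Z a X) (sq Z a Y) ↔ μf X ≤ μf Y) := by
    intro X Y hX hY
    rw [hμf]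
    dsimp only
    rw [div_le_div_iff₀ (hrpos X hX) (hrpos Y hY)]
    unfold CrossLE
    constructor <;> intro h <;> nlinarith [h]
  have mu_lt_DR : ∀ {X : Subobject E} (θ : ℝ), a < X → θ < μf X →
      θ * RR (sq Z a X) < DD (sq Z a X) := by
    intro X θ hX h
    rw [hμf] at h
    dsimp only at h
    rw [lt_div_iff₀ (hrpos X hX)] at h
    linarith
  have DR_le_mu : ∀ {X : Subobject E} (θ : ℝ), a < X → θ * RR (sq Z a X) ≤ DD (sq Z a X) →
      θ ≤ μf X := by
    intro X θ hX h
    rw [hμf]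
    dsimp only
    rw [le_div_iff₀ (hrpos X hX)]
    linarith
  have mu_le_DR : ∀ {X : Subobject E} (θ : ℝ), a < X → μf X ≤ θ →
      DD (sq Z a X) ≤ θ * RR (sq Z a X) := by
    intro X θ hX h
    rw [hμf] at h
    dsimp only at h
    rw [div_le_iff₀ (hrpos X hX)] at h
    linarith
  have Tne : ∀ θ : ℝ, ∀ X, a < X → θ < μf X → ∃ u, u ∈ Tset Z a θ := by
    intro θ X hX hθ
    obtain ⟨u, hau, huX, hsemi, hcross⟩ := hc.shrink hX
    have hμu : θ < μf u := lt_of_lt_of_le hθ ((cross_iff hX hau).1 hcross)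
    exact ⟨u, hc.semi_to_T hau hsemi (hrpos u hau) (mu_lt_DR θ hau hμu)⟩
  have Tgr : ∀ θ : ℝ, (Tset Z a θ).Nonempty →
      ∃ g ∈ Tset Z a θ, ∀ x ∈ Tset Z a θ, x ≤ g := by
    intro θ hne
    exact hc.greatest _ hne (fun x hx y hy => hc.T_join hx hy)
  have hbdd : BddAbove S := by
    by_contra hbd
    have hex : ∀ n : ℕ, ∃ g ∈ Tset Z a (n : ℝ), ∀ x ∈ Tset Z a (n : ℝ), x ≤ g := by
      intro n
      rw [not_bddAbove_iff] at hbd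
      obtain ⟨r, ⟨X, hXlt, rfl⟩, hr⟩ := hbd (n : ℝ)
      exact Tgr _ (Tne _ X hXlt hr)
    choose g hgT hgmax using hex
    have hdec : ∀ n : ℕ, g (n + 1) ≤ g n := fun n =>
      hgmax n _ (hc.T_mono (by exact_mod_cast Nat.le_succ n) (hgT (n + 1)))
    have hant : ∀ {m n : ℕ}, m ≤ n → g n ≤ g m := by
      intro m n h
      induction h with
      | refl => exact le_rfl
      | step _ ih => exact le_trans (hdec _) ih
    obtain ⟨N, hN⟩ := hc.rank_stab g hdec
    have hDle : ∀ n, N ≤ n → DD (sq Z a (g n)) ≤ DD (sq Z a (g N)) := by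
      intro n hn
      have hsplit := DD_add_of_le (Z := Z) a (g n) (g N)
      have hnn : 0 ≤ DD (sq Z (g n) (g N)) := by
        rcases eq_or_lt_of_le (hant hn) with heq | hlt
        · rw [heq, sq_self, DD_zero]
        · exact (hc.hD0 hlt (hN n hn)).le
      linarith
    obtain ⟨m0, hm0⟩ := exists_nat_gt (DD (sq Z a (g N)) / ε)
    set m := max N m0 with hm
    have hmN : N ≤ m := le_max_left _ _
    have h1 : (m : ℝ) * RR (sq Z a (g m)) ≤ DD (sq Z a (g m)) :=
      (hgT m).2 a le_rfl (hgT m).1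
    have h2 : ε ≤ RR (sq Z a (g m)) := hre _ (hgT m).1
    have h3 : (m : ℝ) * ε ≤ DD (sq Z a (g N)) := by
      calc (m : ℝ) * ε ≤ (m : ℝ) * RR (sq Z a (g m)) :=
            mul_le_mul_of_nonneg_left h2 (Nat.cast_nonneg m)
      _ ≤ DD (sq Z a (g m)) := h1
      _ ≤ DD (sq Z a (g N)) := hDle m hmN
    have h4 : DD (sq Z a (g N)) / ε < m :=
      lt_of_lt_of_le hm0 (by exact_mod_cast le_max_right N m0)
    rw [div_lt_iff₀ hc.heps] at h4
    linarith
  set s : ℝ := sSup S with hs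
  have hmu_le : ∀ X, a < X → μf X ≤ s := fun X h => le_csSup hbdd ⟨X, h, rfl⟩
  have hatt : ∃ X, a < X ∧ μf X = s := by
    by_contra hcon
    push_neg at hcon
    set θ : ℕ → ℝ := fun n => s - 1 / (n + 1) with hθ
    have hθlt : ∀ n, θ n < s := by
      intro n
      have h0 : 0 < 1 / ((n : ℝ) + 1) := by positivity
      simp only [hθ]
      linarith
    have hθmono : ∀ n, θ n ≤ θ (n + 1) := by
      intro n
      have h1 : (0:ℝ) < (n : ℝ) + 1 := by positivity
      have h2 : 1 / ((n : ℝ) + 1 + 1) ≤ 1 / ((n : ℝ) + 1) :=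
        one_div_le_one_div_of_le h1 (by linarith)
      simp only [hθ]
      push_cast
      linarith
    have hex : ∀ n : ℕ, ∃ g ∈ Tset Z a (θ n), ∀ x ∈ Tset Z a (θ n), x ≤ g := by
      intro n
      obtain ⟨r, ⟨X, hXlt, rfl⟩, hr⟩ := exists_lt_of_lt_csSup hSne (hθlt n)
      exact Tgr _ (Tne _ X hXlt hr)
    choose g hgT hgmax using hex
    have hdec : ∀ n : ℕ, g (n + 1) ≤ g n := fun n =>
      hgmax n _ (hc.T_mono (hθmono n) (hgT (n + 1)))
    have hant : ∀ {m n : ℕ}, m ≤ n → g n ≤ g m := by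
      intro m n h
      induction h with
      | refl => exact le_rfl
      | step _ ih => exact le_trans (hdec _) ih
    obtain ⟨N, hN⟩ := hc.rank_stab g hdec
    have hDle : ∀ n, N ≤ n → DD (sq Z a (g n)) ≤ DD (sq Z a (g N)) := by
      intro n hn
      have hsplit := DD_add_of_le (Z := Z) a (g n) (g N)
      have hnn : 0 ≤ DD (sq Z (g n) (g N)) := by
        rcases eq_or_lt_of_le (hant hn) with heq | hlt
        · rw [heq, sq_self, DD_zero]
        · exact (hc.hD0 hlt (hN n hn)).le
      linarith
    have hReq : ∀ n, N ≤ n → RR (sq Z a (g n)) = RR (sq Z a (g N)) := by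
      intro n hn
      have hsplit := RR_add_of_le (Z := Z) a (g n) (g N)
      rw [hN n hn] at hsplit
      linarith
    have hmula : ∀ n, N ≤ n → μf (g n) ≤ μf (g N) := by
      intro n hn
      rw [hμf]
      dsimp only
      rw [hReq n hn]
      gcongr
      · exact (hrpos _ (hgT N).1).le
      · exact hDle n hn
    have hμNle : μf (g N) ≤ s := hmu_le _ (hgT N).1
    have hμNne : μf (g N) ≠ s := hcon _ (hgT N).1
    have hδ : 0 < s - μf (g N) := sub_pos.mpr (lt_of_le_of_ne hμNle hμNne)
    obtain ⟨j0, hj0⟩ := exists_nat_gt (1 / (s - μf (g N)))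
    set j := max N j0 with hj
    have hjN : N ≤ j := le_max_left _ _
    have hj0j : (j0 : ℝ) ≤ j := by exact_mod_cast le_max_right N j0
    have h1j : 1 / ((j:ℝ) + 1) < s - μf (g N) := by
      have hpos : (0:ℝ) < (j:ℝ) + 1 := by positivity
      rw [div_lt_iff₀ hpos]
      rw [div_lt_iff₀ hδ] at hj0
      nlinarith [hδ]
    have h3 : θ j ≤ μf (g j) := DR_le_mu (θ j) (hgT j).1 ((hgT j).2 a le_rfl (hgT j).1)
    have h4 : μf (g j) ≤ μf (g N) := hmula j hjN
    have h5 : μf (g N) < θ j := by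
      simp only [hθ]
      linarith
    linarith
  obtain ⟨Xs, hXslt, hXμ⟩ := hatt
  have maxT : ∀ X, a < X → μf X = s → X ∈ Tset Z a s := by
    intro X hX hXs
    have hDX : DD (sq Z a X) = s * RR (sq Z a X) := by
      rw [hμf] at hXs
      dsimp only at hXs
      field_simp [ne_of_gt (hrpos X hX)] at hXs
      linarith [hXs]
    refine ⟨hX, fun C haC hCX => ?_⟩
    rcases eq_or_lt_of_le haC with heq | haltC
    · subst heq
      rw [hDX]
    · have hCle : DD (sq Z a C) ≤ s * RR (sq Z a C) := mu_le_DR s haltC (hmu_le C haltC)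
      have hR := RR_add_of_le (Z := Z) a C X
      have hD := DD_add_of_le (Z := Z) a C X
      have hsR : s * RR (sq Z a X) = s * RR (sq Z a C) + s * RR (sq Z C X) := by
        rw [hR]; ring
      linarith
  obtain ⟨b, hbT, hbmax⟩ := Tgr s ⟨Xs, maxT Xs hXslt hXμ⟩
  have hab : a < b := hbT.1
  have hRb : 0 < RR (sq Z a b) := hrpos b hab
  have hDb : DD (sq Z a b) = s * RR (sq Z a b) := by
    have h1 : s * RR (sq Z a b) ≤ DD (sq Z a b) := hbT.2 a le_rfl hbT.1
    have h2 : DD (sq Z a b) ≤ s * RR (sq Z a b) := mu_le_DR s hab (hmu_le b hab)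
    linarith
  have hs2 : ∀ X, a < X → CrossLE (sq Z a X) (sq Z a b) := by
    intro X hX
    unfold CrossLE
    have hXle : DD (sq Z a X) ≤ s * RR (sq Z a X) := mu_le_DR s hX (hmu_le X hX)
    nlinarith [mul_le_mul_of_nonneg_right hXle hRb.le, hDb, hc.him hX.le]
  have hs1 : SemiLat Z a b := by
    intro C haC hCb
    rcases eq_or_lt_of_le haC with heq | haltC
    · subst heq
      unfold CrossLE
      rw [sq_self, DD_zero, RR_zero]
      simp
    · exact hs2 C haltC
  have hs3 : ∀ X, b < X → CrossLT (sq Z a X) (sq Z a b) := by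
    intro X hbX
    have haX : a < X := lt_trans hab hbX
    rcases lt_or_eq_of_le (hmu_le X haX) with h | h
    · have hXlt : DD (sq Z a X) < s * RR (sq Z a X) := by
        rw [hμf] at h
        dsimp only at h
        rw [div_lt_iff₀ (hrpos X haX)] at h
        linarith
      unfold CrossLT
      nlinarith [mul_lt_mul_of_pos_right hXlt hRb, hDb, hrpos X haX]
    · exact absurd (lt_of_lt_of_le hbX (hbmax X (maxT X haX h))) (lt_irrefl b)
  exact ⟨b, hab, hs1, hs2, hs3⟩

end LCtx


def HNChain {𝒜 : Type*} [CategoryTheory.Category 𝒜] [CategoryTheory.Abelian 𝒜]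
    (Z : 𝒜 → ℂ) {E : 𝒜} (a : Subobject E) (n : ℕ) (G : ℕ → Subobject E) : Prop :=
  G 0 = a ∧ G n = ⊤ ∧ (∀ i, i < n → G i < G (i + 1)) ∧
  (∀ i, i < n → SemiLat Z (G i) (G (i + 1))) ∧
  (∀ i, i + 1 < n → CrossLT (sq Z (G (i + 1)) (G (i + 2))) (sq Z (G i) (G (i + 1))))

lemma crossLT_cancel {x y : ℂ} (h : CrossLT (x + y) x) : CrossLT y x := by
  unfold CrossLT at *
  rw [LCtx.DD_addc, LCtx.RR_addc] at h
  nlinarith [h]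

namespace LCtx
variable {𝒜 : Type*} [Category 𝒜] [Abelian 𝒜]
variable {Z : 𝒜 → ℂ} {E : 𝒜} {ε : ℝ} (hc : LCtx Z E ε)

include hc in
/-- Case (i) step: greatest rank-zero extension. -/
lemma step_zero {a X0 : Subobject E} (hX0 : a < X0) (hr0 : RR (sq Z a X0) = 0) :
    ∃ b, a < b ∧ SemiLat Z a b ∧
      (∀ X, b < X → CrossLT (sq Z a X) (sq Z a b)) ∧
      (∀ X, b < X → RR (sq Z b X) ≠ 0) := by
  set Ns : Set (Subobject E) := {X | a ≤ X ∧ RR (sq Z a X) = 0} with hNs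
  have hjoin : ∀ x ∈ Ns, ∀ y ∈ Ns, x ⊔ y ∈ Ns := by
    intro x hx y hy
    refine ⟨le_trans hx.1 le_sup_left, ?_⟩
    have h1 : sq Z a (x ⊔ y) + sq Z a (x ⊓ y) = sq Z a x + sq Z a y := by
      unfold sq
      linear_combination hc.hmod x y
    have h2 : RR (sq Z a (x ⊔ y)) + RR (sq Z a (x ⊓ y))
        = RR (sq Z a x) + RR (sq Z a y) := by
      have h3 := congrArg Complex.im h1
      simpa [RR, Complex.add_im] using h3
    have h3 : 0 ≤ RR (sq Z a (x ⊓ y)) := hc.him (le_inf hx.1 hy.1)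
    have h4 : 0 ≤ RR (sq Z a (x ⊔ y)) := hc.him (le_trans hx.1 le_sup_left)
    have hx2 := hx.2
    have hy2 := hy.2
    linarith
  obtain ⟨b, hbN, hbmax⟩ := hc.greatest Ns ⟨X0, hX0.le, hr0⟩ hjoin
  have hab : a < b := lt_of_lt_of_le hX0 (hbmax X0 ⟨hX0.le, hr0⟩)
  have hDb : 0 < DD (sq Z a b) := hc.hD0 hab hbN.2
  have hmem : ∀ X, a ≤ X → RR (sq Z a X) = 0 → X ≤ b := fun X h1 h2 => hbmax X ⟨h1, h2⟩
  refine ⟨b, hab, ?_, ?_, ?_⟩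
  · intro C haC hCb
    have hRC : RR (sq Z a C) = 0 := by
      have h1 := RR_add_of_le (Z := Z) a C b
      have h2 := hc.him haC
      have h3 := hc.him hCb
      have hb2 := hbN.2
      linarith
    unfold CrossLE
    rw [hbN.2, hRC, mul_zero, mul_zero]
  · intro X hbX
    unfold CrossLT
    rw [hbN.2, mul_zero]
    have hRX : 0 < RR (sq Z a X) := by
      rcases eq_or_lt_of_le (hc.him (le_of_lt (lt_trans hab hbX))) with h | h
      · exfalso
        have := hmem X (le_of_lt (lt_trans hab hbX)) h.symm
        exact absurd (lt_of_lt_of_le hbX this) (lt_irrefl b)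
      · exact h
    exact mul_pos hDb hRX
  · intro X hbX h0
    have h1 := RR_add_of_le (Z := Z) a b X
    rw [hbN.2, h0] at h1
    have := hmem X (le_of_lt (lt_trans hab hbX)) (by linarith)
    exact absurd (lt_of_lt_of_le hbX this) (lt_irrefl b)

include hc in
/-- prepend a step to a chain -/
lemma prepend {a b : Subobject E} (hab : a < b)
    (hs1 : SemiLat Z a b) (hs3 : ∀ X, b < X → CrossLT (sq Z a X) (sq Z a b))
    {m : ℕ} {G' : ℕ → Subobject E} (hch : HNChain Z b m G') :
    ∃ n G, HNChain Z a n G := by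
  obtain ⟨hG'0, hG'top, hG'lt, hG'semi, hG'sl⟩ := hch
  set G : ℕ → Subobject E := fun i => if i = 0 then a else G' (i - 1) with hG
  have hGsucc : ∀ i : ℕ, G (i + 1) = G' i := by
    intro i
    simp [hG]
  have hG0 : G 0 = a := by simp [hG]
  refine ⟨m + 1, G, hG0, ?_, ?_, ?_, ?_⟩
  · rw [hGsucc m, hG'top]
  · intro i hi
    cases i with
    | zero => rw [hG0, hGsucc 0, hG'0]; exact hab
    | succ j =>
      rw [hGsucc j, hGsucc (j + 1)]
      exact hG'lt j (by omega)
  · intro i hi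
    cases i with
    | zero => rw [hG0, hGsucc 0, hG'0]; exact hs1
    | succ j =>
      rw [hGsucc j, hGsucc (j + 1)]
      exact hG'semi j (by omega)
  · intro i hi
    cases i with
    | zero =>
      rw [hG0, hGsucc 0, hGsucc 1, hG'0]
      have h1m : 0 < m := by omega
      have hbG1 : b < G' 1 := by
        rw [← hG'0]
        exact hG'lt 0 h1m
      have h3 := hs3 (G' 1) hbG1
      have hsplit : sq Z a (G' 1) = sq Z a b + sq Z b (G' 1) := sq_add _ _ _
      rw [hsplit] at h3
      exact crossLT_cancel h3
    | succ j =>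
      rw [hGsucc j, hGsucc (j + 1), hGsucc (j + 2)]
      exact hG'sl j (by omega)

include hc in
lemma chain_pos : ∀ k : ℕ, ∀ a : Subobject E, a < ⊤ →
    (∀ X, a < X → RR (sq Z a X) ≠ 0) →
    RR (sq Z a ⊤) < k * ε → ∃ n G, HNChain Z a n G := by
  intro k
  induction k with
  | zero =>
    intro a ha hnr hbud
    exfalso
    have := hc.him (le_top : a ≤ ⊤)
    push_cast at hbud
    linarith
  | succ k ih =>
    intro a ha hnr hbud
    obtain ⟨b, hab, hs1, hs2, hs3⟩ := hc.step_pos ha hnr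
    rcases eq_or_lt_of_le (le_top : b ≤ ⊤) with htop | htop
    · -- b = ⊤ : chain of length 0 above b
      refine hc.prepend hab hs1 hs3 (m := 0) (G' := fun _ => ⊤) ?_
      refine ⟨htop.symm ▸ rfl, rfl, ?_, ?_, ?_⟩ <;> intro i hi <;> omega
    · have hnrb : ∀ X, b < X → RR (sq Z b X) ≠ 0 := by
        intro X hbX h0
        have haX : a < X := lt_trans hab hbX
        have hD : 0 < DD (sq Z b X) := hc.hD0 hbX h0
        have hcr := hs2 X haX
        unfold CrossLE at hcr
        have hDD := DD_add_of_le (Z := Z) a b X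
        have hRR := RR_add_of_le (Z := Z) a b X
        have hRb : ε ≤ RR (sq Z a b) := (hc.hgap hab.le).resolve_left (hnr b hab)
        rw [h0] at hRR
        rw [hDD, hRR] at hcr
        nlinarith [hcr, mul_pos hD (lt_of_lt_of_le hc.heps hRb)]
      have hbudb : RR (sq Z b ⊤) < k * ε := by
        have hsplit := RR_add_of_le (Z := Z) a b ⊤
        have hεb : ε ≤ RR (sq Z a b) := (hc.hgap hab.le).resolve_left (hnr b hab)
        push_cast at hbud ⊢
        linarith
      obtain ⟨m, G', hch⟩ := ih b htop hnrb hbudb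
      exact hc.prepend hab hs1 hs3 hch

include hc in
lemma full_chain (hbt : (⊥ : Subobject E) < ⊤) :
    ∃ n G, HNChain Z (⊥ : Subobject E) n G := by
  by_cases h0 : ∃ X, (⊥ : Subobject E) < X ∧ RR (sq Z ⊥ X) = 0
  · obtain ⟨X0, hX0, hr0⟩ := h0
    obtain ⟨b, hab, hs1, hs3, hnrb⟩ := hc.step_zero hX0 hr0
    rcases eq_or_lt_of_le (le_top : b ≤ ⊤) with htop | htop
    · refine hc.prepend hab hs1 hs3 (m := 0) (G' := fun _ => ⊤) ?_
      refine ⟨htop.symm ▸ rfl, rfl, ?_, ?_, ?_⟩ <;> intro i hi <;> omega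
    · obtain ⟨k, hk⟩ := exists_nat_gt (RR (sq Z b ⊤) / ε)
      have hbud : RR (sq Z b ⊤) < k * ε := by
        rw [div_lt_iff₀ hc.heps] at hk
        linarith
      obtain ⟨m, G', hch⟩ := hc.chain_pos k b htop hnrb hbud
      exact hc.prepend hab hs1 hs3 hch
  · push_neg at h0
    obtain ⟨k, hk⟩ := exists_nat_gt (RR (sq Z (⊥ : Subobject E) ⊤) / ε)
    have hbud : RR (sq Z (⊥ : Subobject E) ⊤) < k * ε := by
      rw [div_lt_iff₀ hc.heps] at hk
      linarith
    exact hc.chain_pos k ⊥ hbt (fun X hX => h0 X hX) hbud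

end LCtx

end AuxLattice

/-- Existence of Harder–Narasimhan filtrations: if `𝒜` is noetherian and the image of
the generalized rank is discrete in `ℝ`, then every nonzero object `E` admits a finite
chain of subobjects `0 = E₀ ⊊ E₁ ⊊ … ⊊ Eₙ = E` whose subquotients are `Z`-semistable
of strictly decreasing slopes. -/
theorem hn_filtration_exists (Z : 𝒜 → ℂ) (hZ : IsStabilityFunction Z)
    (hNoeth : NoetherianCategory 𝒜) (hDisc : HasDiscreteRank Z)
    (E : 𝒜) (hE : ¬ IsZero E) :
    ∃ (n : ℕ) (F : ℕ → Subobject E) (hF : ∀ i, i < n → F i < F (i + 1)),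
      F 0 = ⊥ ∧ F n = ⊤ ∧
      (∀ i (h : i < n), IsSemistable Z (subquot (F i) (F (i + 1)) (hF i h).le)) ∧
      ∀ i (h : i + 1 < n),
        SlopeLT Z (subquot (F (i + 1)) (F (i + 2)) (hF (i + 1) h).le)
          (subquot (F i) (F (i + 1)) (hF i (Nat.lt_of_succ_lt h)).le) := by
  classical
  obtain ⟨hadd, hstab⟩ := hZ
  -- the value of `Z` on a subquotient vector
  have hsqZ : ∀ {A B : Subobject E} (h : A ≤ B), sq Z A B = Z (subquot A B h) := by
    intro A B h
    rw [Z_subquot hadd A B h]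
    rfl
  -- a positive gap below all nonzero ranks
  have h0mem : (0 : ℝ) ∈ Set.range (genR Z) := by
    refine ⟨((⊥ : Subobject E) : 𝒜), ?_⟩
    have hz : IsZero ((⊥ : Subobject E) : 𝒜) :=
      (isZero_zero 𝒜).of_iso Subobject.botCoeIsoZero
    simp [genR, Z_of_isZero hadd hz]
  obtain ⟨ε, hε, hgap0⟩ := hDisc 0 h0mem
  have him : ∀ {A B : Subobject E}, A ≤ B → 0 ≤ RR (sq Z A B) := by
    intro A B h
    rcases eq_or_lt_of_le h with rfl | hlt
    · rw [LCtx.sq_self, RR_zero]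
    · have := (hstab _ (subquot_not_isZero hlt)).1
      rw [hsqZ hlt.le]
      exact this
  have hc : LCtx Z E ε := by
    refine ⟨hε, fun {A B} h => him h, ?_, ?_, ?_, ?_⟩
    · intro A B hlt h0
      rw [hsqZ hlt.le] at h0 ⊢
      have := (hstab _ (subquot_not_isZero hlt)).2 h0
      unfold DD
      linarith
    · intro A B h
      rcases eq_or_lt_of_le h with rfl | hlt
      · left; rw [LCtx.sq_self, RR_zero]
      · by_cases hy : RR (sq Z A B) < ε
        · left
          have hmem : RR (sq Z A B) ∈ Set.range (genR Z) := by
            refine ⟨subquot A B hlt.le, ?_⟩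
            rw [hsqZ hlt.le]
            rfl
          have habs : |RR (sq Z A B) - 0| < ε := by
            rw [sub_zero, abs_of_nonneg (him h)]
            exact hy
          exact hgap0 _ hmem habs
        · right; linarith [not_lt.mp hy]
    · exact fun A B => Z_modular hadd A B
    · intro f hf
      obtain ⟨N, hN⟩ := hNoeth E ⟨f, monotone_nat_of_le_succ (fun n => (hf n).le)⟩
      exact (hf N).ne ((hN (N + 1) (Nat.le_succ N)).symm)
  -- the bottom is strictly below the top
  have hbt : (⊥ : Subobject E) < ⊤ := by
    rcases eq_or_lt_of_le (bot_le : (⊥ : Subobject E) ≤ ⊤) with heq | h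
    · exfalso
      apply hE
      refine (isZero_zero 𝒜).of_iso ?_
      exact (asIso (⊤ : Subobject E).arrow).symm ≪≫
        (Subobject.isoOfEq ⊤ ⊥ heq.symm) ≪≫ Subobject.botCoeIsoZero
    · exact h
  obtain ⟨n, G, hG0, hGtop, hGlt, hGsemi, hGsl⟩ := hc.full_chain hbt
  refine ⟨n, G, fun i hi => hGlt i hi, hG0, hGtop, ?_, ?_⟩
  · intro i h
    refine ⟨subquot_not_isZero (hGlt i h), ?_⟩
    intro F f hmono hFnz hfniso
    haveI := hmono
    obtain ⟨C, hAC, hCB, ⟨e⟩⟩ := corr (hGlt i h).le F f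
    have hZF : Z F = sq Z (G i) C := by
      have h1 := Z_iso hadd e
      have h2 := Z_subquot hadd (G i) C hAC
      exact h1.symm.trans h2
    have hsm := hGsemi i h C hAC hCB
    unfold CrossLE DD RR at hsm
    show genD Z F * genR Z (subquot (G i) (G (i + 1)) (hGlt i h).le)
      ≤ genD Z (subquot (G i) (G (i + 1)) (hGlt i h).le) * genR Z F
    unfold genD genR
    rw [hZF, ← hsqZ (hGlt i h).le]
    exact hsm
  · intro i h
    have hlt := hGsl i h
    unfold CrossLT DD RR at hlt
    show genD Z (subquot (G (i + 1)) (G (i + 2)) (hGlt (i + 1) h).le)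
        * genR Z (subquot (G i) (G (i + 1)) (hGlt i (Nat.lt_of_succ_lt h)).le)
      < genD Z (subquot (G i) (G (i + 1)) (hGlt i (Nat.lt_of_succ_lt h)).le)
        * genR Z (subquot (G (i + 1)) (G (i + 2)) (hGlt (i + 1) h).le)
    unfold genD genR
    rw [← hsqZ (hGlt (i + 1) h).le, ← hsqZ (hGlt i (Nat.lt_of_succ_lt h)).le]
    exact hlt


end BridgelandNotes
end

section
/- With V, B, Q, Z, z₀ and 𝒞⁺_ρ as in the context (Q negative semi-definite on the kernel of Z): for all w₁, w₂ ∈ 𝒞⁺_ρ one has B(w₁, w₂) ≥ 0. -/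
/-!
Write `Z w₁ = t₁ z₀` and `Z w₂ = t₂ z₀` with `t₁, t₂ > 0`. Then `v = t₂ w₁ - t₁ w₂` lies in the
kernel of `Z`, so `0 ≥ Q(v) = t₂² Q(w₁) - 2 t₁ t₂ B(w₁, w₂) + t₁² Q(w₂)`, and the two outer terms
are nonnegative.
-/

section General

variable {R M N : Type*} [CommRing R] [AddCommGroup M] [Module R M]
  [AddCommGroup N] [Module R N]

theorem LinearMap.map_smul_sub_smul_eq_zero (Z : M →ₗ[R] N) {x y : M} {a b : R} {z : N}
    (hx : Z x = a • z) (hy : Z y = b • z) : Z (b • x - a • y) = 0 := by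
  rw [map_sub, map_smul, map_smul, hx, hy, smul_smul, smul_smul, mul_comm, sub_self]

theorem LinearMap.apply_smul_sub_smul_self (B : M →ₗ[R] M →ₗ[R] R) (x y : M) (a b : R) :
    B (a • x - b • y) (a • x - b • y) =
      a ^ 2 * B x x - a * b * (B x y + B y x) + b ^ 2 * B y y := by
  simp only [map_sub, map_smul, LinearMap.sub_apply, LinearMap.smul_apply, smul_eq_mul]
  ring

theorem LinearMap.add_apply_swap_nonneg {K : Type*} [Field K] [LinearOrder K]
    [IsStrictOrderedRing K] [Module K M] (B : M →ₗ[K] M →ₗ[K] K) {x y : M} {a b : K}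
    (ha : 0 < a) (hb : 0 < b) (hx : 0 ≤ B x x) (hy : 0 ≤ B y y)
    (hxy : B (a • x - b • y) (a • x - b • y) ≤ 0) : 0 ≤ B x y + B y x := by
  rw [B.apply_smul_sub_smul_self] at hxy
  have hab : 0 < a * b := mul_pos ha hb
  have : 0 ≤ a * b * (B x y + B y x) := by
    nlinarith [mul_nonneg (sq_nonneg a) hx, mul_nonneg (sq_nonneg b) hy]
  exact nonneg_of_mul_nonneg_right this hab

end General

namespace BridgelandNotes

variable {V : Type*} [AddCommGroup V] [Module ℝ V]

/-- The cone `𝒞⁺_ρ = {w ∈ V : Z(w) ∈ ρ and Q(w) ≥ 0}`, where `ρ = {t·z₀ : t > 0}`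
is the open ray through `z₀` and `Q(w) = B(w, w)`. -/
def posCone (B : V →ₗ[ℝ] V →ₗ[ℝ] ℝ) (Z : V →ₗ[ℝ] ℂ) (z₀ : ℂ) : Set V :=
  {w | (∃ t : ℝ, 0 < t ∧ Z w = t • z₀) ∧ 0 ≤ B w w}

theorem bilin_nonneg_on_posCone_general (B : V →ₗ[ℝ] V →ₗ[ℝ] ℝ)
    (hsymm : ∀ x y : V, B x y = B y x)
    (Z : V →ₗ[ℝ] ℂ) (hker : ∀ v : V, Z v = 0 → B v v ≤ 0)
    (z₀ : ℂ)
    (w₁ w₂ : V) (h₁ : w₁ ∈ posCone B Z z₀) (h₂ : w₂ ∈ posCone B Z z₀) :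
    0 ≤ B w₁ w₂ := by
  obtain ⟨⟨t₁, ht₁, hZ₁⟩, hQ₁⟩ := h₁
  obtain ⟨⟨t₂, ht₂, hZ₂⟩, hQ₂⟩ := h₂
  have hQv := hker _ (Z.map_smul_sub_smul_eq_zero hZ₁ hZ₂)
  have hsum := B.add_apply_swap_nonneg ht₂ ht₁ hQ₁ hQ₂ hQv
  rw [hsymm w₂ w₁] at hsum
  linarith

/-- If the quadratic form `Q(w) = B(w,w)` is negative semi-definite on the kernel of
`Z`, then `B(w₁, w₂) ≥ 0` for all `w₁, w₂ ∈ 𝒞⁺_ρ`. -/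
theorem bilin_nonneg_on_posCone (B : V →ₗ[ℝ] V →ₗ[ℝ] ℝ)
    (hsymm : ∀ x y : V, B x y = B y x)
    (Z : V →ₗ[ℝ] ℂ) (hker : ∀ v : V, Z v = 0 → B v v ≤ 0)
    (z₀ : ℂ) (hz₀ : z₀ ≠ 0)
    (w₁ w₂ : V) (h₁ : w₁ ∈ posCone B Z z₀) (h₂ : w₂ ∈ posCone B Z z₀) :
    0 ≤ B w₁ w₂ :=
  bilin_nonneg_on_posCone_general B hsymm Z hker z₀ w₁ w₂ h₁ h₂

end BridgelandNotes
end

section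
/- With V, B, Q, Z, z₀ and 𝒞⁺_ρ as in the context (Q negative semi-definite on the kernel of Z): the set 𝒞⁺_ρ is a convex cone, i.e., it is closed under addition (w₁, w₂ ∈ 𝒞⁺_ρ implies w₁ + w₂ ∈ 𝒞⁺_ρ) and under multiplication by positive real scalars (w ∈ 𝒞⁺_ρ and t > 0 implies t·w ∈ 𝒞⁺_ρ). -/
namespace BridgelandNotes

variable {V : Type*} [AddCommGroup V] [Module ℝ V]

section Bilinear

variable {R M : Type*} [CommRing R] [AddCommGroup M] [Module R M]

theorem apply_add_self (B : M →ₗ[R] M →ₗ[R] R) (x y : M) :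
    B (x + y) (x + y) = B x x + (B x y + B y x) + B y y := by
  simp only [map_add, LinearMap.add_apply]
  ring

theorem apply_smul_sub_smul_self (B : M →ₗ[R] M →ₗ[R] R) (x y : M) (s t : R) :
    B (s • x - t • y) (s • x - t • y) =
      s * s * B x x - s * t * (B x y + B y x) + t * t * B y y := by
  simp only [map_sub, map_smul, LinearMap.sub_apply, LinearMap.smul_apply, smul_eq_mul]
  ring

theorem add_apply_swap_nonneg [LinearOrder R] [IsStrictOrderedRing R]
    (B : M →ₗ[R] M →ₗ[R] R) {x y : M} {s t : R}
    (hs : 0 < s) (ht : 0 < t) (hx : 0 ≤ B x x) (hy : 0 ≤ B y y)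
    (hxy : B (s • x - t • y) (s • x - t • y) ≤ 0) : 0 ≤ B x y + B y x := by
  rw [apply_smul_sub_smul_self] at hxy
  have : 0 ≤ s * t * (B x y + B y x) := by
    nlinarith [mul_nonneg (mul_self_nonneg s) hx, mul_nonneg (mul_self_nonneg t) hy]
  exact (mul_nonneg_iff_of_pos_left (mul_pos hs ht)).mp this

end Bilinear

theorem smul_mem_posCone {B : V →ₗ[ℝ] V →ₗ[ℝ] ℝ} {Z : V →ₗ[ℝ] ℂ} {z₀ : ℂ} {w : V}
    (hw : w ∈ posCone B Z z₀) {t : ℝ} (ht : 0 < t) : t • w ∈ posCone B Z z₀ := by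
  obtain ⟨⟨s, hs, hZ⟩, hQ⟩ := hw
  refine ⟨⟨t * s, mul_pos ht hs, by rw [map_smul, hZ, smul_smul]⟩, ?_⟩
  simp only [map_smul, LinearMap.smul_apply, smul_eq_mul]
  positivity

/-- Writing `Z wᵢ = tᵢ z₀`, the vector `t₂ w₁ - t₁ w₂` lies in the kernel of `Z`, so `Q` is
nonpositive there; this forces `B w₁ w₂ + B w₂ w₁ ≥ 0`. -/
theorem add_mem_posCone (B : V →ₗ[ℝ] V →ₗ[ℝ] ℝ) (Z : V →ₗ[ℝ] ℂ)
    (hker : ∀ v : V, Z v = 0 → B v v ≤ 0) {z₀ : ℂ} {w₁ w₂ : V}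
    (hw₁ : w₁ ∈ posCone B Z z₀) (hw₂ : w₂ ∈ posCone B Z z₀) :
    w₁ + w₂ ∈ posCone B Z z₀ := by
  obtain ⟨⟨t₁, ht₁, hZ₁⟩, hQ₁⟩ := hw₁
  obtain ⟨⟨t₂, ht₂, hZ₂⟩, hQ₂⟩ := hw₂
  have hkerZ : Z (t₂ • w₁ - t₁ • w₂) = 0 := by
    rw [map_sub, map_smul, map_smul, hZ₁, hZ₂, smul_smul, smul_smul, mul_comm,
      sub_self]
  have hpolar := add_apply_swap_nonneg B ht₂ ht₁ hQ₁ hQ₂ (hker _ hkerZ)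
  refine ⟨⟨t₁ + t₂, add_pos ht₁ ht₂, by rw [map_add, hZ₁, hZ₂, add_smul]⟩, ?_⟩
  rw [apply_add_self]
  positivity

theorem posCone_convex_cone_general (B : V →ₗ[ℝ] V →ₗ[ℝ] ℝ)
    (Z : V →ₗ[ℝ] ℂ) (hker : ∀ v : V, Z v = 0 → B v v ≤ 0)
    (z₀ : ℂ) :
    (∀ w₁ w₂ : V, w₁ ∈ posCone B Z z₀ → w₂ ∈ posCone B Z z₀ →
      w₁ + w₂ ∈ posCone B Z z₀) ∧
    (∀ w : V, w ∈ posCone B Z z₀ → ∀ t : ℝ, 0 < t → t • w ∈ posCone B Z z₀) :=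
  ⟨fun _ _ => add_mem_posCone B Z hker, fun _ hw _ ht => smul_mem_posCone hw ht⟩

/-- If the quadratic form `Q(w) = B(w,w)` is negative semi-definite on the kernel of
`Z`, then `𝒞⁺_ρ` is a convex cone: it is closed under addition and under
multiplication by positive real scalars. -/
theorem posCone_convex_cone (B : V →ₗ[ℝ] V →ₗ[ℝ] ℝ)
    (hsymm : ∀ x y : V, B x y = B y x)
    (Z : V →ₗ[ℝ] ℂ) (hker : ∀ v : V, Z v = 0 → B v v ≤ 0)
    (z₀ : ℂ) (hz₀ : z₀ ≠ 0) :
    (∀ w₁ w₂ : V, w₁ ∈ posCone B Z z₀ → w₂ ∈ posCone B Z z₀ →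
      w₁ + w₂ ∈ posCone B Z z₀) ∧
    (∀ w : V, w ∈ posCone B Z z₀ → ∀ t : ℝ, 0 < t → t • w ∈ posCone B Z z₀) :=
  posCone_convex_cone_general B Z hker z₀

end BridgelandNotes
end

section
/- With V, B, Q, Z, z₀ and 𝒞⁺_ρ as in the context (Q negative semi-definite on the kernel of Z): if w, w₁, w₂ ∈ 𝒞⁺_ρ satisfy w = w₁ + w₂, then 0 ≤ Q(w₁) + Q(w₂) ≤ Q(w); moreover, if Q(w₁) = Q(w), then Q(w) = Q(w₁) = Q(w₂) = B(w₁, w₂) = 0. -/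
/-!
If `Z w₁ = t₁ z₀` and `Z w₂ = t₂ z₀` with `t₁, t₂ > 0`, then `t₂ w₁ - t₁ w₂ ∈ ker Z`, so
`Q(t₂ w₁ - t₁ w₂) ≤ 0`. Expanding gives the reverse Cauchy–Schwarz inequality
`t₂² Q(w₁) + t₁² Q(w₂) ≤ 2 t₁ t₂ B(w₁, w₂)`, hence `B(w₁, w₂) ≥ 0`, and
`Q(w) = Q(w₁) + 2 B(w₁, w₂) + Q(w₂)` gives the inequalities. If `Q(w₁) = Q(w)`, then
`2 B(w₁, w₂) + Q(w₂) = 0` forces `B(w₁, w₂) = 0`, and then the left side of the reverse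
Cauchy–Schwarz inequality, a sum of nonnegative terms, vanishes.
-/

namespace BridgelandNotes

variable {V : Type*} [AddCommGroup V] [Module ℝ V]

section Bilinear

variable {R M N : Type*} [CommRing R] [AddCommGroup M] [Module R M]
  [AddCommGroup N] [Module R N]

theorem map_smul_sub_smul_eq_zero (Z : M →ₗ[R] N) {x y : M} {a b : R} {n : N}
    (hx : Z x = a • n) (hy : Z y = b • n) : Z (b • x - a • y) = 0 := by
  rw [map_sub, map_smul, map_smul, hx, hy, smul_smul, smul_smul, mul_comm, sub_self]

variable {B : M →ₗ[R] M →ₗ[R] R} (hB : ∀ x y, B x y = B y x)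
include hB

theorem apply_add_add_of_symm (x y : M) :
    B (x + y) (x + y) = B x x + 2 * B x y + B y y := by
  simp only [map_add, LinearMap.add_apply, hB y x]
  ring

theorem apply_smul_sub_smul_of_symm (x y : M) (a b : R) :
    B (a • x - b • y) (a • x - b • y) =
      a ^ 2 * B x x - 2 * a * b * B x y + b ^ 2 * B y y := by
  simp only [map_sub, map_smul, LinearMap.sub_apply, LinearMap.smul_apply, smul_eq_mul, hB y x]
  ring

end Bilinear

section PosCone

variable {B : V →ₗ[ℝ] V →ₗ[ℝ] ℝ} {Z : V →ₗ[ℝ] ℂ} {z₀ : ℂ}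

theorem sq_mul_add_sq_mul_le_of_mem_ray (hB : ∀ x y, B x y = B y x)
    (hker : ∀ v, Z v = 0 → B v v ≤ 0) {w₁ w₂ : V} {t₁ t₂ : ℝ}
    (hZ₁ : Z w₁ = t₁ • z₀) (hZ₂ : Z w₂ = t₂ • z₀) :
    t₂ ^ 2 * B w₁ w₁ + t₁ ^ 2 * B w₂ w₂ ≤ 2 * t₂ * t₁ * B w₁ w₂ := by
  have h := hker _ (map_smul_sub_smul_eq_zero Z hZ₁ hZ₂)
  rw [apply_smul_sub_smul_of_symm hB] at h
  linarith

variable (hB : ∀ x y, B x y = B y x) (hker : ∀ v, Z v = 0 → B v v ≤ 0)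
  {w₁ w₂ : V} (h₁ : w₁ ∈ posCone B Z z₀) (h₂ : w₂ ∈ posCone B Z z₀)
include hB hker h₁ h₂

theorem posCone_apply_nonneg : 0 ≤ B w₁ w₂ := by
  obtain ⟨⟨t₁, ht₁, hZ₁⟩, hQ₁⟩ := h₁
  obtain ⟨⟨t₂, ht₂, hZ₂⟩, hQ₂⟩ := h₂
  have h := sq_mul_add_sq_mul_le_of_mem_ray hB hker hZ₁ hZ₂
  have hsum : 0 ≤ t₂ ^ 2 * B w₁ w₁ + t₁ ^ 2 * B w₂ w₂ := by positivity
  have ht : 0 < 2 * t₂ * t₁ := by positivity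
  exact nonneg_of_mul_nonneg_right (by linarith) ht

theorem posCone_apply_self_eq_zero_of_apply_eq_zero (h : B w₁ w₂ = 0) :
    B w₁ w₁ = 0 ∧ B w₂ w₂ = 0 := by
  obtain ⟨⟨t₁, ht₁, hZ₁⟩, hQ₁⟩ := h₁
  obtain ⟨⟨t₂, ht₂, hZ₂⟩, hQ₂⟩ := h₂
  have hle := sq_mul_add_sq_mul_le_of_mem_ray hB hker hZ₁ hZ₂
  rw [h, mul_zero] at hle
  have hle₁ : t₂ ^ 2 * B w₁ w₁ ≤ 0 := by
    have : 0 ≤ t₁ ^ 2 * B w₂ w₂ := by positivity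
    linarith
  have hle₂ : t₁ ^ 2 * B w₂ w₂ ≤ 0 := by
    have : 0 ≤ t₂ ^ 2 * B w₁ w₁ := by positivity
    linarith
  exact ⟨le_antisymm (nonpos_of_mul_nonpos_right hle₁ (by positivity)) hQ₁,
    le_antisymm (nonpos_of_mul_nonpos_right hle₂ (by positivity)) hQ₂⟩

end PosCone

theorem posCone_additivity_general (B : V →ₗ[ℝ] V →ₗ[ℝ] ℝ)
    (hsymm : ∀ x y : V, B x y = B y x)
    (Z : V →ₗ[ℝ] ℂ) (hker : ∀ v : V, Z v = 0 → B v v ≤ 0)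
    (z₀ : ℂ)
    (w w₁ w₂ : V)
    (h₁ : w₁ ∈ posCone B Z z₀) (h₂ : w₂ ∈ posCone B Z z₀)
    (hsum : w = w₁ + w₂) :
    (0 ≤ B w₁ w₁ + B w₂ w₂ ∧ B w₁ w₁ + B w₂ w₂ ≤ B w w) ∧
    (B w₁ w₁ = B w w →
      B w w = 0 ∧ B w₁ w₁ = 0 ∧ B w₂ w₂ = 0 ∧ B w₁ w₂ = 0) := by
  have hQ : B w w = B w₁ w₁ + 2 * B w₁ w₂ + B w₂ w₂ := hsum ▸ apply_add_add_of_symm hsymm w₁ w₂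
  have hB₁₂ := posCone_apply_nonneg hsymm hker h₁ h₂
  have hQ₁ := h₁.2
  have hQ₂ := h₂.2
  refine ⟨⟨by linarith, by linarith⟩, fun heq => ?_⟩
  have hB₁₂_eq : B w₁ w₂ = 0 := by linarith
  obtain ⟨hQ₁_eq, hQ₂_eq⟩ :=
    posCone_apply_self_eq_zero_of_apply_eq_zero hsymm hker h₁ h₂ hB₁₂_eq
  exact ⟨by linarith, hQ₁_eq, hQ₂_eq, hB₁₂_eq⟩

/-- If the quadratic form `Q(w) = B(w,w)` is negative semi-definite on the kernel of
`Z`, and `w, w₁, w₂ ∈ 𝒞⁺_ρ` satisfy `w = w₁ + w₂`, then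
`0 ≤ Q(w₁) + Q(w₂) ≤ Q(w)`; moreover `Q(w₁) = Q(w)` implies
`Q(w) = Q(w₁) = Q(w₂) = B(w₁, w₂) = 0`. -/
theorem posCone_additivity (B : V →ₗ[ℝ] V →ₗ[ℝ] ℝ)
    (hsymm : ∀ x y : V, B x y = B y x)
    (Z : V →ₗ[ℝ] ℂ) (hker : ∀ v : V, Z v = 0 → B v v ≤ 0)
    (z₀ : ℂ) (hz₀ : z₀ ≠ 0)
    (w w₁ w₂ : V) (hw : w ∈ posCone B Z z₀)
    (h₁ : w₁ ∈ posCone B Z z₀) (h₂ : w₂ ∈ posCone B Z z₀)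
    (hsum : w = w₁ + w₂) :
    (0 ≤ B w₁ w₁ + B w₂ w₂ ∧ B w₁ w₁ + B w₂ w₂ ≤ B w w) ∧
    (B w₁ w₁ = B w w →
      B w w = 0 ∧ B w₁ w₁ = 0 ∧ B w₂ w₂ = 0 ∧ B w₁ w₂ = 0) :=
  posCone_additivity_general B hsymm Z hker z₀ w w₁ w₂ h₁ h₂ hsum

end BridgelandNotes
end

section
/- With V, B, Q, Z, z₀ and 𝒞⁺_ρ as in the context, assume additionally that Q is negative definite on the kernel of Z (Q(v) < 0 for every nonzero v with Z(v) = 0). Then every w ∈ 𝒞⁺_ρ with Q(w) = 0 generates an extremal ray of 𝒞⁺_ρ: whenever w = w₁ + w₂ with w₁, w₂ ∈ 𝒞⁺_ρ, both w₁ and w₂ are positive scalar multiples of w. -/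
/-!
Write `Z wᵢ = tᵢ z₀`. Then `u = t₂ w₁ - t₁ w₂` lies in the kernel of `Z`, and expanding
`Q(w₁ + w₂) = 0` shows `Q(u) ≥ 0`. Negative definiteness on the kernel forces `u = 0`, i.e.
`w₁` and `w₂` are proportional with positive ratio, hence both are positive multiples of `w`.
-/

namespace BridgelandNotes

variable {V : Type*} [AddCommGroup V] [Module ℝ V]

theorem apply_smul_sub_smul_nonneg_of_isotropic_add (B : V →ₗ[ℝ] V →ₗ[ℝ] ℝ) {x y : V}
    (hxy : B (x + y) (x + y) = 0) (hx : 0 ≤ B x x) (hy : 0 ≤ B y y) {a b : ℝ}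
    (ha : 0 ≤ a) (hb : 0 ≤ b) :
    0 ≤ B (b • x - a • y) (b • x - a • y) := by
  have hcross : B x y + B y x = -(B x x + B y y) := by
    simp only [map_add, LinearMap.add_apply] at hxy
    linarith
  have hexpand : B (b • x - a • y) (b • x - a • y) =
      b * (a + b) * B x x + a * (a + b) * B y y := by
    simp only [map_sub, map_smul, LinearMap.sub_apply, LinearMap.smul_apply, smul_eq_mul]
    linear_combination (-(a * b)) * hcross
  rw [hexpand]
  positivity

theorem map_smul_sub_smul_eq_zero_s9 {W : Type*} [AddCommGroup W] [Module ℝ W]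
    (Z : V →ₗ[ℝ] W) {x y : V} {z : W} {s t : ℝ} (hx : Z x = s • z) (hy : Z y = t • z) :
    Z (t • x - s • y) = 0 := by
  rw [map_sub, map_smul, map_smul, hx, hy, smul_smul, smul_smul, mul_comm, sub_self]

theorem eq_zero_of_map_eq_zero_of_apply_self_nonneg (B : V →ₗ[ℝ] V →ₗ[ℝ] ℝ)
    {W : Type*} [AddCommGroup W] [Module ℝ W] {Z : V →ₗ[ℝ] W}
    (hker : ∀ v : V, v ≠ 0 → Z v = 0 → B v v < 0) {v : V} (hZ : Z v = 0) (hB : 0 ≤ B v v) :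
    v = 0 := by
  by_contra hv
  exact (hker v hv hZ).not_ge hB

theorem eq_div_add_smul_add_of_smul_eq_smul {M : Type*} [AddCommGroup M] [Module ℝ M]
    {x y : M} {a b : ℝ} (hab : a + b ≠ 0) (h : b • x = a • y) :
    x = (a / (a + b)) • (x + y) := by
  have hscaled : (a + b) • x = a • (x + y) := by rw [add_smul, smul_add, h]
  rw [div_eq_inv_mul, mul_smul, ← hscaled, inv_smul_smul₀ hab]

theorem posCone_extremal_ray_general (B : V →ₗ[ℝ] V →ₗ[ℝ] ℝ)
    (Z : V →ₗ[ℝ] ℂ) (hker : ∀ v : V, v ≠ 0 → Z v = 0 → B v v < 0)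
    (z₀ : ℂ)
    (w : V) (hQ : B w w = 0)
    (w₁ w₂ : V) (h₁ : w₁ ∈ posCone B Z z₀) (h₂ : w₂ ∈ posCone B Z z₀)
    (hsum : w = w₁ + w₂) :
    (∃ t : ℝ, 0 < t ∧ w₁ = t • w) ∧ (∃ t : ℝ, 0 < t ∧ w₂ = t • w) := by
  obtain ⟨⟨t₁, ht₁, hZ₁⟩, hq₁⟩ := h₁
  obtain ⟨⟨t₂, ht₂, hZ₂⟩, hq₂⟩ := h₂
  subst hsum
  have hprop : t₂ • w₁ = t₁ • w₂ :=
    sub_eq_zero.mp <| eq_zero_of_map_eq_zero_of_apply_self_nonneg B hker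
      (map_smul_sub_smul_eq_zero_s9 Z hZ₁ hZ₂)
      (apply_smul_sub_smul_nonneg_of_isotropic_add B hQ hq₁ hq₂ ht₁.le ht₂.le)
  have hw₁ := eq_div_add_smul_add_of_smul_eq_smul (add_pos ht₁ ht₂).ne' hprop
  have hw₂ := eq_div_add_smul_add_of_smul_eq_smul (add_pos ht₂ ht₁).ne' hprop.symm
  rw [add_comm w₂] at hw₂
  exact ⟨⟨_, div_pos ht₁ (add_pos ht₁ ht₂), hw₁⟩, ⟨_, div_pos ht₂ (add_pos ht₂ ht₁), hw₂⟩⟩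

/-- If the quadratic form `Q(w) = B(w,w)` is negative definite on the kernel of `Z`,
then any `w ∈ 𝒞⁺_ρ` with `Q(w) = 0` generates an extremal ray of `𝒞⁺_ρ`: whenever
`w = w₁ + w₂` with `w₁, w₂ ∈ 𝒞⁺_ρ`, both `w₁` and `w₂` are positive scalar multiples
of `w`. -/
theorem posCone_extremal_ray (B : V →ₗ[ℝ] V →ₗ[ℝ] ℝ)
    (hsymm : ∀ x y : V, B x y = B y x)
    (Z : V →ₗ[ℝ] ℂ) (hker : ∀ v : V, v ≠ 0 → Z v = 0 → B v v < 0)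
    (z₀ : ℂ) (hz₀ : z₀ ≠ 0)
    (w : V) (hw : w ∈ posCone B Z z₀) (hQ : B w w = 0)
    (w₁ w₂ : V) (h₁ : w₁ ∈ posCone B Z z₀) (h₂ : w₂ ∈ posCone B Z z₀)
    (hsum : w = w₁ + w₂) :
    (∃ t : ℝ, 0 < t ∧ w₁ = t • w) ∧ (∃ t : ℝ, 0 < t ∧ w₂ = t • w) :=
  posCone_extremal_ray_general B Z hker z₀ w hQ w₁ w₂ h₁ h₂ hsum

end BridgelandNotes
end
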